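/- arXiv:2112.08852 — 8 statements merged into one kernel-verified Lean document; each statement's English description precedes it below -/
import Mathlib

section
/- For every integer k ≥ 2 and every real δ ∈ (0,1) there exist a natural number n₀ = n₀(k,δ) and a real constant C = C(k,δ) > 0 with the following property. Let n ≥ n₀, let 1 ≤ t₁ < t₂ < … < t_k be real numbers such that for all indices 1 ≤ ℓ₁ ≤ ℓ₂ < ℓ₃ ≤ k one has t_{ℓ₃} ∉ [(1−δ)(t_{ℓ₁}+t_{ℓ₂}), t_{ℓ₁}+t_{ℓ₂}+2], and let P ⊂ ℝ² be a separated set with |P| = n. Then the number of unordered pairs {p,q} of distinct points of P whose Euclidean distance lies in ⋃_{ℓ=1}^k [t_ℓ, t_ℓ+1] is at most n²/4 + C·n. -/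
/-!
Let `m` and `T` be the numbers of ordered edges and ordered triangles of the graph of near pairs
on the `n` points. Summing `deg x + deg y ≤ n + #(common neighbours of x and y)` over the edges
and applying Cauchy–Schwarz gives the Goodman-type inequality `2 m² ≤ n (n m + T)`, so it
suffices to show `T = O(m)`.

Charge every triangle to its longest side `uw`, with other sides `p ≤ q ≤ d = |uw|`. The
separation of the `t_ℓ` from the near-sums `t_{ℓ₁} + t_{ℓ₂}` makes every such triangle either
small (`p < 2/δ`) or far from degenerate (`δ p ≤ 2 (p + q - d)`). In the second case, once the
bands of `p` and `q` are fixed, Heron's formula bounds the distance from the third vertex to the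
line `uw` below by `δ p / 2`, so the third vertex lies in two boxes of size `O(1) × O(1/δ)` in
coordinates along and across `uw`. A unit-separated set has `O(1/δ²)` points in a ball of
radius `2/δ` and `O(1/δ)` points in such a box, so every ordered edge carries
`O(k²/δ + 1/δ²)` triangles.
-/

/-- The number of unordered pairs `{p, q}` of distinct points of the finite set `P ⊂ ℝ²`
whose Euclidean distance lies in the set `S ⊆ ℝ`. -/
noncomputable def nearPairs (P : Finset (EuclideanSpace ℝ (Fin 2))) (S : Set ℝ) : ℕ :=
  Set.ncard {e : Sym2 (EuclideanSpace ℝ (Fin 2)) |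
    ¬ e.IsDiag ∧ (∀ p ∈ e, p ∈ P) ∧
      Sym2.lift ⟨fun p q => dist p q, fun _ _ => dist_comm _ _⟩ e ∈ S}

open Finset

local notation "ℝ²" => EuclideanSpace ℝ (Fin 2)

def UnitSeparated {α : Type*} [PseudoMetricSpace α] (s : Set α) : Prop :=
  s.Pairwise fun p q => 1 ≤ dist p q

section Packing

lemma card_Icc_floor_le {x c : ℝ} (hc : 0 ≤ c) :
    (#(Icc ⌊x - c⌋ ⌊x + c⌋) : ℝ) ≤ 2 * c + 2 := by
  have h₁ := Int.floor_le (x + c)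
  have h₂ := Int.lt_floor_add_one (x - c)
  rw [Int.card_Icc, ← Int.cast_natCast, Int.toNat_eq_max, Int.cast_max]
  push_cast
  exact max_le (by linarith) (by linarith)

variable {α : Type*} [PseudoMetricSpace α]

/-- A cell of side `1/2` in the `(g₁, g₂)`-plane holds at most one point of `V`. -/
theorem UnitSeparated.card_le_of_spread {V : Finset α} (hV : UnitSeparated (V : Set α))
    (g₁ g₂ : α → ℝ) {W H : ℝ} (hW : 0 ≤ W) (hH : 0 ≤ H)
    (hdist : ∀ v ∈ V, ∀ v' ∈ V, dist v v' ^ 2 ≤ (g₁ v - g₁ v') ^ 2 + (g₂ v - g₂ v') ^ 2)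
    (h₁ : ∀ v ∈ V, ∀ v' ∈ V, |g₁ v - g₁ v'| ≤ W)
    (h₂ : ∀ v ∈ V, ∀ v' ∈ V, |g₂ v - g₂ v'| ≤ H) :
    (#V : ℝ) ≤ (4 * W + 2) * (4 * H + 2) := by
  rcases V.eq_empty_or_nonempty with rfl | ⟨v₀, hv₀⟩
  · simp only [card_empty, Nat.cast_zero]
    positivity
  let cell (v : α) : ℤ × ℤ := (⌊2 * g₁ v⌋, ⌊2 * g₂ v⌋)
  let box : Finset (ℤ × ℤ) := Icc ⌊2 * g₁ v₀ - 2 * W⌋ ⌊2 * g₁ v₀ + 2 * W⌋ ×ˢ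
    Icc ⌊2 * g₂ v₀ - 2 * H⌋ ⌊2 * g₂ v₀ + 2 * H⌋
  have hmaps : Set.MapsTo cell V box := by
    intro v hv
    have e₁ := abs_le.mp (h₁ v hv v₀ hv₀)
    have e₂ := abs_le.mp (h₂ v hv v₀ hv₀)
    simp only [box, cell, coe_product, Set.mem_prod, coe_Icc, Set.mem_Icc]
    refine ⟨⟨?_, ?_⟩, ?_, ?_⟩ <;> apply Int.floor_le_floor <;> linarith
  have hinj : Set.InjOn cell V := by
    intro v hv v' hv' hcell
    by_contra hne
    have hsep := hV hv hv' hne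
    have d₁ := abs_lt.mp (Int.abs_sub_lt_one_of_floor_eq_floor (Prod.ext_iff.mp hcell).1)
    have d₂ := abs_lt.mp (Int.abs_sub_lt_one_of_floor_eq_floor (Prod.ext_iff.mp hcell).2)
    nlinarith [hdist v hv v' hv']
  calc (#V : ℝ) ≤ #box := by exact_mod_cast card_le_card_of_injOn cell hmaps hinj
    _ ≤ (2 * (2 * W) + 2) * (2 * (2 * H) + 2) := by
      rw [card_product, Nat.cast_mul]
      exact mul_le_mul (card_Icc_floor_le (by positivity)) (card_Icc_floor_le (by positivity))
        (by positivity) (by positivity)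
    _ = (4 * W + 2) * (4 * H + 2) := by ring

lemma UnitSeparated.filter {V : Finset α} (hV : UnitSeparated (V : Set α)) (p : α → Prop)
    [DecidablePred p] : UnitSeparated (V.filter p : Set α) :=
  Set.Pairwise.mono (coe_subset.mpr (filter_subset _ _)) hV

theorem UnitSeparated.card_le_of_abs_spread {V : Finset α} (hV : UnitSeparated (V : Set α))
    (g₁ g₂ : α → ℝ) {W H : ℝ} (hW : 0 ≤ W) (hH : 0 ≤ H)
    (hdist : ∀ v ∈ V, ∀ v' ∈ V, dist v v' ^ 2 ≤ (g₁ v - g₁ v') ^ 2 + (g₂ v - g₂ v') ^ 2)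
    (h₁ : ∀ v ∈ V, ∀ v' ∈ V, |g₁ v - g₁ v'| ≤ W)
    (h₂ : ∀ v ∈ V, ∀ v' ∈ V, |(|g₂ v| - |g₂ v'|)| ≤ H) :
    (#V : ℝ) ≤ 2 * ((4 * W + 2) * (4 * H + 2)) := by
  classical
  have half (σ : ℝ) (hσ : σ = 1 ∨ σ = -1) :
      (#{v ∈ V | 0 ≤ σ * g₂ v} : ℝ) ≤ (4 * W + 2) * (4 * H + 2) := by
    have hsign : ∀ v ∈ {v ∈ V | 0 ≤ σ * g₂ v}, |g₂ v| = σ * g₂ v := by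
      intro v hv
      rcases hσ with rfl | rfl <;> simp only [mem_filter] at hv
      · rw [one_mul, abs_of_nonneg (by linarith [hv.2])]
      · rw [abs_of_nonpos (by linarith [hv.2])]; ring
    refine (hV.filter _).card_le_of_spread g₁ (fun v => σ * g₂ v) hW hH (fun v hv v' hv' => ?_)
      (fun v hv v' hv' => h₁ v (mem_filter.mp hv).1 v' (mem_filter.mp hv').1)
      (fun v hv v' hv' => ?_)
    · have hσ2 : σ ^ 2 = 1 := by rcases hσ with rfl | rfl <;> norm_num
      calc dist v v' ^ 2 ≤ (g₁ v - g₁ v') ^ 2 + (g₂ v - g₂ v') ^ 2 :=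
            hdist v (mem_filter.mp hv).1 v' (mem_filter.mp hv').1
        _ = (g₁ v - g₁ v') ^ 2 + (σ * g₂ v - σ * g₂ v') ^ 2 := by
            rw [← mul_sub, mul_pow, hσ2, one_mul]
    · rw [← hsign v hv, ← hsign v' hv']
      exact h₂ v (mem_filter.mp hv).1 v' (mem_filter.mp hv').1
  have hcover : V ⊆ {v ∈ V | 0 ≤ 1 * g₂ v} ∪ {v ∈ V | 0 ≤ -1 * g₂ v} := by
    intro v hv
    rcases le_total 0 (g₂ v) with h | h
    · exact mem_union_left _ (mem_filter.mpr ⟨hv, by linarith⟩)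
    · exact mem_union_right _ (mem_filter.mpr ⟨hv, by linarith⟩)
  calc (#V : ℝ) ≤ #{v ∈ V | 0 ≤ 1 * g₂ v} + #{v ∈ V | 0 ≤ -1 * g₂ v} := by
        exact_mod_cast (card_le_card hcover).trans (card_union_le _ _)
    _ ≤ 2 * ((4 * W + 2) * (4 * H + 2)) := by
        linarith [half 1 (.inl rfl), half (-1) (.inr rfl)]

end Packing

lemma dist_sq_eq_coords (v v' : ℝ²) : dist v v' ^ 2 = (v 0 - v' 0) ^ 2 + (v 1 - v' 1) ^ 2 := by
  simp [EuclideanSpace.dist_sq_eq, Fin.sum_univ_two, Real.dist_eq, sq_abs]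

/-- Coordinates of `v` in the orthonormal frame with origin `u` and first axis towards `w`. -/
noncomputable def coordAlong (u w v : ℝ²) : ℝ :=
  ((w 0 - u 0) * (v 0 - u 0) + (w 1 - u 1) * (v 1 - u 1)) / dist u w

noncomputable def coordAcross (u w v : ℝ²) : ℝ :=
  ((w 1 - u 1) * (v 0 - u 0) - (w 0 - u 0) * (v 1 - u 1)) / dist u w

lemma dist_sq_eq_coordAlong_coordAcross {u w : ℝ²} (huw : u ≠ w) (v v' : ℝ²) :
    dist v v' ^ 2 = (coordAlong u w v - coordAlong u w v') ^ 2 +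
      (coordAcross u w v - coordAcross u w v') ^ 2 := by
  have hd : dist u w ≠ 0 := dist_ne_zero.mpr huw
  have hd2 := dist_sq_eq_coords u w
  simp only [coordAlong, coordAcross, dist_sq_eq_coords v v']
  field_simp
  linear_combination ((v 0 - v' 0) ^ 2 + (v 1 - v' 1) ^ 2) * hd2

lemma dist_sq_eq_coordAlong_sq_add {u w : ℝ²} (huw : u ≠ w) (v : ℝ²) :
    dist u v ^ 2 = coordAlong u w v ^ 2 + coordAcross u w v ^ 2 := by
  have hu : coordAlong u w u = 0 ∧ coordAcross u w u = 0 := by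
    simp [coordAlong, coordAcross]
  rw [dist_comm, dist_sq_eq_coordAlong_coordAcross huw, hu.1, hu.2]
  ring

lemma two_mul_dist_mul_coordAlong {u w : ℝ²} (huw : u ≠ w) (v : ℝ²) :
    2 * dist u w * coordAlong u w v = dist u v ^ 2 + dist u w ^ 2 - dist w v ^ 2 := by
  have hd : dist u w ≠ 0 := dist_ne_zero.mpr huw
  simp only [coordAlong, dist_sq_eq_coords]
  field_simp
  ring

theorem UnitSeparated.card_le_of_forall_dist_le {V : Finset ℝ²}
    (hV : UnitSeparated (V : Set ℝ²)) {u : ℝ²} {ρ : ℝ} (hρ : 0 ≤ ρ)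
    (hball : ∀ v ∈ V, dist u v ≤ ρ) :
    (#V : ℝ) ≤ (8 * ρ + 2) ^ 2 := by
  have hcoord (i : Fin 2) : ∀ v ∈ V, ∀ v' ∈ V, |v i - v' i| ≤ 2 * ρ := by
    intro v hv v' hv'
    calc |v i - v' i| ≤ dist v v' := by rw [← Real.dist_eq]; exact PiLp.dist_apply_le v v' i
      _ ≤ dist u v + dist u v' := dist_triangle_left v v' u
      _ ≤ 2 * ρ := by linarith [hball v hv, hball v' hv']
  calc (#V : ℝ) ≤ (4 * (2 * ρ) + 2) * (4 * (2 * ρ) + 2) :=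
        hV.card_le_of_spread (· 0) (· 1) (by positivity) (by positivity)
          (fun v _ v' _ => (dist_sq_eq_coords v v').le) (hcoord 0) (hcoord 1)
    _ = (8 * ρ + 2) ^ 2 := by ring

lemma four_mul_sq_mul_coordAcross_sq {u w : ℝ²} (huw : u ≠ w) (v : ℝ²) :
    4 * dist u w ^ 2 * coordAcross u w v ^ 2 =
      (dist u v + dist w v + dist u w) * (dist u v + dist w v - dist u w) *
        (dist u v + dist u w - dist w v) * (dist w v + dist u w - dist u v) := by
  linear_combination (-4 * dist u w ^ 2) * dist_sq_eq_coordAlong_sq_add huw v -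
    (dist u v ^ 2 + dist u w ^ 2 - dist w v ^ 2 + 2 * dist u w * coordAlong u w v) *
      two_mul_dist_mul_coordAlong huw v

lemma mul_sq_le_four_mul_sq_of_heron {p q d y δ : ℝ} (hd : 0 < d) (hp : 0 ≤ p) (hpq : p ≤ q)
    (hqd : q ≤ d) (hdpq : d ≤ p + q) (hδ : δ * p ≤ 2 * (p + q - d))
    (heron : 4 * d ^ 2 * y ^ 2 = (p + q + d) * (p + q - d) * (p + d - q) * (q + d - p)) :
    δ * p ^ 2 ≤ 4 * y ^ 2 := by
  have hfactors : 2 * d * p * d ≤ (p + q + d) * (p + d - q) * (q + d - p) := by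
    have h₁ : 2 * d * p ≤ (p + q + d) * (p + d - q) := by nlinarith
    exact mul_le_mul h₁ (by linarith) hd.le (by nlinarith)
  have : δ * p ^ 2 * d ^ 2 ≤ 4 * y ^ 2 * d ^ 2 := by
    calc δ * p ^ 2 * d ^ 2 = (2 * d * p * d) * (δ * p) / 2 := by ring
      _ ≤ (2 * d * p * d) * (2 * (p + q - d)) / 2 := by gcongr
      _ ≤ (p + q + d) * (p + d - q) * (q + d - p) * (2 * (p + q - d)) / 2 := by
        gcongr
      _ = 4 * y ^ 2 * d ^ 2 := by linear_combination (-1 : ℝ) * heron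
  exact le_of_mul_le_mul_right this (by positivity)

lemma abs_sq_sub_sq_le {r a b : ℝ} (hr : 0 ≤ r) (ha : a ∈ Set.Icc r (r + 1))
    (hb : b ∈ Set.Icc r (r + 1)) : |a ^ 2 - b ^ 2| ≤ 2 * r + 1 := by
  obtain ⟨ha₁, ha₂⟩ := ha
  obtain ⟨hb₁, hb₂⟩ := hb
  rw [abs_le]
  constructor <;> nlinarith

lemma abs_abs_sub_abs_le_of_abs_sq_sub_sq_le {a b m c : ℝ} (hm : 0 < m) (ha : m ≤ |a|)
    (hb : m ≤ |b|) (h : |a ^ 2 - b ^ 2| ≤ c) : |(|a| - |b|)| ≤ c / (2 * m) := by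
  rw [le_div_iff₀ (by positivity)]
  calc |(|a| - |b|)| * (2 * m) ≤ |(|a| - |b|)| * (|a| + |b|) := by gcongr; linarith
    _ = |a ^ 2 - b ^ 2| := by
      rw [← sq_abs a, ← sq_abs b, sq_sub_sq, abs_mul,
        abs_of_nonneg (by positivity : 0 ≤ |a| + |b|)]
      ring
    _ ≤ c := h

/-- `v` is at distance `≈ r` from `u` and `≈ R` from `w`, `uw` is the longest side of `uwv`, and
the triangle is `δ`-far from degenerate. -/
def InLens (δ r R : ℝ) (u w v : ℝ²) : Prop :=
  dist u v ∈ Set.Icc r (r + 1) ∧ dist w v ∈ Set.Icc R (R + 1) ∧ dist u v ≤ dist w v ∧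
    dist w v ≤ dist u w ∧ δ * dist u v ≤ 2 * (dist u v + dist w v - dist u w)

namespace InLens

variable {δ r R : ℝ} {u w v v' : ℝ²}

lemma one_le_dist (hv : InLens δ r R u w v) (hr : 1 ≤ r) : 1 ≤ dist u w := by
  linarith [hv.1.1, hv.2.2.1, hv.2.2.2.1]

lemma ne (hv : InLens δ r R u w v) (hr : 1 ≤ r) : u ≠ w :=
  dist_pos.mp (by linarith [hv.one_le_dist hr])

lemma abs_coordAlong_le (hv : InLens δ r R u w v) (hr : 1 ≤ r) :
    |coordAlong u w v| ≤ r + 1 := by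
  apply abs_le_of_sq_le_sq _ (by linarith)
  nlinarith [dist_sq_eq_coordAlong_sq_add (hv.ne hr) v, sq_nonneg (coordAcross u w v),
    dist_nonneg (x := u) (y := v), hv.1.2]

lemma abs_coordAlong_sub_le (hv : InLens δ r R u w v) (hv' : InLens δ r R u w v')
    (hr : 1 ≤ r) : |coordAlong u w v - coordAlong u w v'| ≤ 3 := by
  have huw := hv.ne hr
  have hd := hv.one_le_dist hr
  obtain ⟨hp, hq, hpq, hqd, -⟩ := hv
  obtain ⟨hp', hq', -⟩ := hv'
  have hsum : |2 * dist u w * (coordAlong u w v - coordAlong u w v')| ≤ 6 * dist u w := by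
    rw [mul_sub, two_mul_dist_mul_coordAlong huw, two_mul_dist_mul_coordAlong huw]
    calc _ = |(dist u v ^ 2 - dist u v' ^ 2) - (dist w v ^ 2 - dist w v' ^ 2)| := by ring_nf
      _ ≤ |dist u v ^ 2 - dist u v' ^ 2| + |dist w v ^ 2 - dist w v' ^ 2| := abs_sub _ _
      _ ≤ (2 * r + 1) + (2 * R + 1) :=
        add_le_add (abs_sq_sub_sq_le (by linarith) hp hp')
          (abs_sq_sub_sq_le (by linarith [hp.1, hq.2]) hq hq')
      _ ≤ 6 * dist u w := by linarith [hp.1, hq.1]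
  rw [abs_mul, abs_of_pos (by positivity)] at hsum
  nlinarith

lemma le_abs_coordAcross (hv : InLens δ r R u w v) (hδ₀ : 0 < δ) (hδ₁ : δ ≤ 1) (hr : 1 ≤ r) :
    δ * r / 2 ≤ |coordAcross u w v| := by
  have hheight := mul_sq_le_four_mul_sq_of_heron (by linarith [hv.one_le_dist hr]) dist_nonneg
    hv.2.2.1 hv.2.2.2.1 (dist_triangle_right u w v) hv.2.2.2.2
    (four_mul_sq_mul_coordAcross_sq (hv.ne hr) v)
  have hsq : (δ * r / 2) ^ 2 ≤ coordAcross u w v ^ 2 := by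
    have : δ * r ^ 2 ≤ δ * dist u v ^ 2 := by gcongr; linarith [hv.1.1]
    nlinarith
  simpa [abs_of_nonneg (by positivity : 0 ≤ δ * r / 2)] using sq_le_sq.mp hsq

lemma abs_coordAcross_sq_sub_le (hv : InLens δ r R u w v) (hv' : InLens δ r R u w v')
    (hr : 1 ≤ r) : |coordAcross u w v ^ 2 - coordAcross u w v' ^ 2| ≤ 15 * r := by
  have huw := hv.ne hr
  have hX2 : |coordAlong u w v ^ 2 - coordAlong u w v' ^ 2| ≤ (2 * r + 2) * 3 := by
    rw [sq_sub_sq, abs_mul]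
    gcongr
    · exact (abs_add_le _ _).trans
        (by linarith [hv.abs_coordAlong_le hr, hv'.abs_coordAlong_le hr])
    · exact hv.abs_coordAlong_sub_le hv' hr
  calc |coordAcross u w v ^ 2 - coordAcross u w v' ^ 2|
      = |(dist u v ^ 2 - dist u v' ^ 2) - (coordAlong u w v ^ 2 - coordAlong u w v' ^ 2)| := by
        rw [dist_sq_eq_coordAlong_sq_add huw v, dist_sq_eq_coordAlong_sq_add huw v']
        ring_nf
    _ ≤ |dist u v ^ 2 - dist u v' ^ 2| + |coordAlong u w v ^ 2 - coordAlong u w v' ^ 2| :=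
        abs_sub _ _
    _ ≤ (2 * r + 1) + (2 * r + 2) * 3 :=
        add_le_add (abs_sq_sub_sq_le (by linarith) hv.1 hv'.1) hX2
    _ ≤ 15 * r := by linarith

end InLens

theorem UnitSeparated.card_le_of_inLens {V : Finset ℝ²} (hV : UnitSeparated (V : Set ℝ²))
    {u w : ℝ²} {δ r R : ℝ} (hδ₀ : 0 < δ) (hδ₁ : δ ≤ 1) (hr : 1 ≤ r)
    (hlens : ∀ v ∈ V, InLens δ r R u w v) :
    (#V : ℝ) ≤ 28 * (60 / δ + 2) := by
  rcases V.eq_empty_or_nonempty with rfl | ⟨v₀, hv₀⟩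
  · simp only [card_empty, Nat.cast_zero]
    positivity
  have huw := (hlens v₀ hv₀).ne hr
  have hYspread : ∀ v ∈ V, ∀ v' ∈ V,
      |(|coordAcross u w v| - |coordAcross u w v'|)| ≤ 15 / δ := by
    intro v hv v' hv'
    calc _ ≤ 15 * r / (2 * (δ * r / 2)) :=
          abs_abs_sub_abs_le_of_abs_sq_sub_sq_le (by positivity)
            ((hlens v hv).le_abs_coordAcross hδ₀ hδ₁ hr)
            ((hlens v' hv').le_abs_coordAcross hδ₀ hδ₁ hr)
            ((hlens v hv).abs_coordAcross_sq_sub_le (hlens v' hv') hr)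
      _ = 15 / δ := by field_simp
  calc (#V : ℝ) ≤ 2 * ((4 * 3 + 2) * (4 * (15 / δ) + 2)) :=
        hV.card_le_of_abs_spread (coordAlong u w) (coordAcross u w) (by norm_num) (by positivity)
          (fun v _ v' _ => (dist_sq_eq_coordAlong_coordAcross huw v v').le)
          (fun v hv v' hv' => (hlens v hv).abs_coordAlong_sub_le (hlens v' hv') hr) hYspread
    _ = 28 * (60 / δ + 2) := by ring

def bandUnion {ι : Type*} (t : ι → ℝ) : Set ℝ := ⋃ i, Set.Icc (t i) (t i + 1)

def AvoidsNearSums {ι : Type*} [LinearOrder ι] (δ : ℝ) (t : ι → ℝ) : Prop :=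
  ∀ l₁ l₂ l₃ : ι, l₁ ≤ l₂ → l₂ < l₃ →
    t l₃ ∉ Set.Icc ((1 - δ) * (t l₁ + t l₂)) (t l₁ + t l₂ + 2)

section Bands

variable {ι : Type*} [LinearOrder ι] {δ : ℝ} {t : ι → ℝ}

/-- Either the sides of `p ≤ q` and `d` share a band, and `p + q - d ≥ p - 1`, or the band of
`d` lies above those of `p` and `q` and hence, by `AvoidsNearSums`, below `(1 - δ) (p + q)`. -/
lemma lt_or_mul_le_of_mem_bandUnion (hδ₀ : 0 < δ) (hδ₁ : δ ≤ 1) (hmono : Monotone t)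
    (hsums : AvoidsNearSums δ t) {p q d : ℝ} (hp : p ∈ bandUnion t) (hq : q ∈ bandUnion t)
    (hd : d ∈ bandUnion t) (hpq : p ≤ q) (hdpq : d ≤ p + q) :
    p < 2 / δ ∨ δ * p ≤ 2 * (p + q - d) := by
  have h2δ : 2 ≤ 2 / δ := by rw [le_div_iff₀ hδ₀]; linarith
  by_cases hdq : d ≤ q + 1
  · rcases lt_or_ge p 2 with hp2 | hp2
    · exact .inl (by linarith)
    · exact .inr (by nlinarith)
  obtain ⟨i, hi⟩ := Set.mem_iUnion.mp hp
  obtain ⟨j, hj⟩ := Set.mem_iUnion.mp hq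
  obtain ⟨l, hl⟩ := Set.mem_iUnion.mp hd
  have hjl : j < l := lt_of_not_ge fun h => hdq (by linarith [hmono h, hl.2, hj.1])
  have hil : i < l := lt_of_not_ge fun h => hdq (by linarith [hmono h, hl.2, hi.1])
  have hlt : t l < (1 - δ) * (t i + t j) := by
    have hnot : t l ∉ Set.Icc ((1 - δ) * (t i + t j)) (t i + t j + 2) := by
      rcases le_total i j with h | h
      · exact hsums i j l h hjl
      · rw [add_comm (t i)]
        exact hsums j i l h hil
    rw [Set.mem_Icc, not_and_or, not_le, not_le] at hnot
    exact hnot.resolve_right (by linarith [hl.1, hi.2, hj.2])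
  rcases lt_or_ge (δ * (p + q)) 2 with hsmall | hlarge
  · left
    rw [lt_div_iff₀ hδ₀]
    nlinarith
  · right
    have : (1 - δ) * (t i + t j) ≤ (1 - δ) * (p + q) := by
      gcongr <;> linarith [hi.1, hj.1]
    nlinarith [hl.2]

end Bands

theorem UnitSeparated.card_le_of_sorted_triangles {ι : Type*} [Fintype ι] [LinearOrder ι]
    {δ : ℝ} {t : ι → ℝ} (hδ₀ : 0 < δ) (hδ₁ : δ ≤ 1) (ht : ∀ i, 1 ≤ t i) (hmono : Monotone t)
    (hsums : AvoidsNearSums δ t) {V : Finset ℝ²} (hV : UnitSeparated (V : Set ℝ²)) {u w : ℝ²}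
    (hsorted : ∀ v ∈ V, dist u v ∈ bandUnion t ∧ dist w v ∈ bandUnion t ∧
      dist u w ∈ bandUnion t ∧ dist u v ≤ dist w v ∧ dist w v ≤ dist u w) :
    (#V : ℝ) ≤ (16 / δ + 2) ^ 2 + Fintype.card ι ^ 2 * (28 * (60 / δ + 2)) := by
  classical
  let lens (ij : ι × ι) : Finset ℝ² := {v ∈ V | InLens δ (t ij.1) (t ij.2) u w v}
  have hcover : V ⊆ {v ∈ V | dist u v ≤ 2 / δ} ∪ univ.biUnion lens := by
    intro v hv
    obtain ⟨hp, hq, hd, hpq, hqd⟩ := hsorted v hv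
    rcases lt_or_mul_le_of_mem_bandUnion hδ₀ hδ₁ hmono hsums hp hq hd hpq
      (dist_triangle_right u w v) with h | h
    · exact mem_union_left _ (mem_filter.mpr ⟨hv, h.le⟩)
    · obtain ⟨i, hi⟩ := Set.mem_iUnion.mp hp
      obtain ⟨j, hj⟩ := Set.mem_iUnion.mp hq
      exact mem_union_right _
        (mem_biUnion.mpr ⟨(i, j), mem_univ _, mem_filter.mpr ⟨hv, hi, hj, hpq, hqd, h⟩⟩)
  have hball : (#{v ∈ V | dist u v ≤ 2 / δ} : ℝ) ≤ (16 / δ + 2) ^ 2 := by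
    calc _ ≤ (8 * (2 / δ) + 2) ^ 2 :=
          (hV.filter _).card_le_of_forall_dist_le (u := u)
            (by positivity) (fun v hv => (mem_filter.mp hv).2)
      _ = (16 / δ + 2) ^ 2 := by ring
  have hlens (ij : ι × ι) : (#(lens ij) : ℝ) ≤ 28 * (60 / δ + 2) :=
    (hV.filter _).card_le_of_inLens hδ₀ hδ₁ (ht ij.1)
      (fun v hv => (mem_filter.mp hv).2)
  calc (#V : ℝ) ≤ #{v ∈ V | dist u v ≤ 2 / δ} + ∑ ij, (#(lens ij) : ℝ) := by
        exact_mod_cast (card_le_card hcover).trans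
          ((card_union_le _ _).trans (Nat.add_le_add_left card_biUnion_le _))
    _ ≤ (16 / δ + 2) ^ 2 + ∑ _ij : ι × ι, 28 * (60 / δ + 2) :=
        add_le_add hball (sum_le_sum fun ij _ => hlens ij)
    _ = (16 / δ + 2) ^ 2 + Fintype.card ι ^ 2 * (28 * (60 / δ + 2)) := by
        rw [sum_const, card_univ, Fintype.card_prod, nsmul_eq_mul]
        push_cast
        ring

namespace SimpleGraph

variable {α : Type*} (G : SimpleGraph α) [DecidableRel G.Adj] (P : Finset α)

def adjPairsIn : Finset (α × α) := {z ∈ P ×ˢ P | G.Adj z.1 z.2}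

/-- Ordered triangles, stored as `((x, y), v)` so that they fibre over the ordered edge `(x, y)`. -/
def trianglesIn : Finset ((α × α) × α) :=
  {z ∈ (P ×ˢ P) ×ˢ P | G.Adj z.1.1 z.1.2 ∧ G.Adj z.1.1 z.2 ∧ G.Adj z.1.2 z.2}

variable {G P} in
lemma mem_adjPairsIn {z : α × α} :
    z ∈ G.adjPairsIn P ↔ (z.1 ∈ P ∧ z.2 ∈ P) ∧ G.Adj z.1 z.2 := by
  rw [adjPairsIn, mem_filter, mem_product]

def degreeIn (x : α) : ℕ := #{v ∈ P | G.Adj x v}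

lemma sum_degreeIn : ∑ x ∈ P, G.degreeIn P x = #(G.adjPairsIn P) := by
  simp only [degreeIn, adjPairsIn, card_filter, sum_product]

lemma sum_adjPairsIn_degreeIn_fst :
    ∑ z ∈ G.adjPairsIn P, G.degreeIn P z.1 = ∑ x ∈ P, G.degreeIn P x ^ 2 := by
  rw [adjPairsIn, sum_filter, sum_product]
  refine sum_congr rfl fun x _ => ?_
  rw [← sum_filter]
  simp only [sum_const, smul_eq_mul, sq]
  rfl

lemma sum_adjPairsIn_degreeIn_snd :
    ∑ z ∈ G.adjPairsIn P, G.degreeIn P z.2 = ∑ x ∈ P, G.degreeIn P x ^ 2 := by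
  rw [adjPairsIn, sum_filter, sum_product, sum_comm]
  refine sum_congr rfl fun y _ => ?_
  simp_rw [G.adj_comm _ y]
  rw [← sum_filter]
  simp only [sum_const, smul_eq_mul, sq]
  rfl

lemma degreeIn_add_degreeIn_le [DecidableEq α] (x y : α) :
    G.degreeIn P x + G.degreeIn P y ≤ #P + #{v ∈ P | G.Adj x v ∧ G.Adj y v} := by
  rw [degreeIn, degreeIn, ← card_union_add_card_inter, filter_and]
  gcongr
  exact union_subset (filter_subset _ _) (filter_subset _ _)

lemma card_filter_trianglesIn (Q : (α × α) × α → Prop) [DecidablePred Q] :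
    #{z ∈ G.trianglesIn P | Q z} =
      ∑ z ∈ G.adjPairsIn P, #{v ∈ P | G.Adj z.1 v ∧ G.Adj z.2 v ∧ Q (z, v)} := by
  rw [trianglesIn, filter_filter, card_filter, sum_product, adjPairsIn, sum_filter]
  refine sum_congr rfl fun z _ => ?_
  split_ifs with h
  · rw [card_filter]
    exact sum_congr rfl fun v _ => by simp only [h, true_and, and_assoc]
  · exact sum_eq_zero fun v _ => by simp only [h, false_and, if_false]

theorem two_mul_sq_card_adjPairsIn_le [DecidableEq α] :
    2 * #(G.adjPairsIn P) ^ 2 ≤ #P * (#P * #(G.adjPairsIn P) + #(G.trianglesIn P)) := by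
  have hCS : #(G.adjPairsIn P) ^ 2 ≤ #P * ∑ x ∈ P, G.degreeIn P x ^ 2 := by
    rw [← sum_degreeIn]
    exact sq_sum_le_card_mul_sum_sq
  have htriangles : #(G.trianglesIn P) =
      ∑ z ∈ G.adjPairsIn P, #{v ∈ P | G.Adj z.1 v ∧ G.Adj z.2 v} := by
    simpa using G.card_filter_trianglesIn P fun _ => True
  have hedges :
      2 * ∑ x ∈ P, G.degreeIn P x ^ 2 ≤ #P * #(G.adjPairsIn P) + #(G.trianglesIn P) :=
    calc 2 * ∑ x ∈ P, G.degreeIn P x ^ 2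
        = ∑ z ∈ G.adjPairsIn P, (G.degreeIn P z.1 + G.degreeIn P z.2) := by
          rw [sum_add_distrib, sum_adjPairsIn_degreeIn_fst, sum_adjPairsIn_degreeIn_snd, two_mul]
      _ ≤ ∑ z ∈ G.adjPairsIn P, (#P + #{v ∈ P | G.Adj z.1 v ∧ G.Adj z.2 v}) :=
          sum_le_sum fun z _ => G.degreeIn_add_degreeIn_le P z.1 z.2
      _ = #P * #(G.adjPairsIn P) + #(G.trianglesIn P) := by
          rw [sum_add_distrib, sum_const, smul_eq_mul, mul_comm, htriangles]
  calc 2 * #(G.adjPairsIn P) ^ 2 ≤ #P * (2 * ∑ x ∈ P, G.degreeIn P x ^ 2) := by linarith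
    _ ≤ #P * (#P * #(G.adjPairsIn P) + #(G.trianglesIn P)) := Nat.mul_le_mul_left _ hedges

lemma card_filter_trianglesIn_rotate (Q : (α × α) × α → Prop) [DecidablePred Q] :
    #{z ∈ G.trianglesIn P | Q ((z.1.2, z.2), z.1.1)} = #{z ∈ G.trianglesIn P | Q z} := by
  let rot : (α × α) × α → (α × α) × α := fun z => ((z.1.2, z.2), z.1.1)
  have hrot : ∀ z ∈ G.trianglesIn P, rot z ∈ G.trianglesIn P := by
    intro z hz
    simp only [trianglesIn, mem_filter, mem_product] at hz ⊢
    exact ⟨⟨⟨hz.1.1.2, hz.1.2⟩, hz.1.1.1⟩, hz.2.2.2, hz.2.1.symm, hz.2.2.1.symm⟩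
  refine card_nbij' rot (rot ∘ rot) (fun z hz => ?_) (fun z hz => ?_) (fun _ _ => rfl)
    (fun _ _ => rfl)
  · simp only [mem_coe, mem_filter] at hz ⊢
    exact ⟨hrot z hz.1, hz.2⟩
  · simp only [mem_coe, mem_filter] at hz ⊢
    exact ⟨hrot _ (hrot z hz.1), hz.2⟩

theorem card_trianglesIn_le_of_charge (R : α → α → α → Prop) [∀ x y, DecidablePred (R x y)]
    {B : ℝ}
    (hR : ∀ z ∈ G.trianglesIn P, R z.1.1 z.1.2 z.2 ∨ R z.1.2 z.2 z.1.1 ∨ R z.2 z.1.1 z.1.2)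
    (hB : ∀ x y, G.Adj x y → (#{v ∈ P | G.Adj x v ∧ G.Adj y v ∧ R x y v} : ℝ) ≤ B) :
    (#(G.trianglesIn P) : ℝ) ≤ 3 * B * #(G.adjPairsIn P) := by
  classical
  let Q : (α × α) × α → Prop := fun z => R z.1.1 z.1.2 z.2
  have hcover : G.trianglesIn P ⊆ {z ∈ G.trianglesIn P | Q z} ∪
      {z ∈ G.trianglesIn P | Q ((z.1.2, z.2), z.1.1)} ∪
      {z ∈ G.trianglesIn P | Q ((z.2, z.1.1), z.1.2)} := by
    intro z hz
    simp only [mem_union, mem_filter]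
    rcases hR z hz with h | h | h
    · exact .inl (.inl ⟨hz, h⟩)
    · exact .inl (.inr ⟨hz, h⟩)
    · exact .inr ⟨hz, h⟩
  have hthird :
      #{z ∈ G.trianglesIn P | Q ((z.2, z.1.1), z.1.2)} = #{z ∈ G.trianglesIn P | Q z} :=
    (G.card_filter_trianglesIn_rotate P fun z => Q ((z.1.2, z.2), z.1.1)).trans
      (G.card_filter_trianglesIn_rotate P Q)
  have hcharged : (#{z ∈ G.trianglesIn P | Q z} : ℝ) ≤ B * #(G.adjPairsIn P) := by
    rw [G.card_filter_trianglesIn P Q, Nat.cast_sum]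
    calc _ ≤ ∑ _z ∈ G.adjPairsIn P, B :=
          sum_le_sum fun z hz => hB z.1 z.2 (mem_adjPairsIn.mp hz).2
      _ = B * #(G.adjPairsIn P) := by rw [sum_const, nsmul_eq_mul, mul_comm]
  have hcard := (card_le_card hcover).trans
    ((card_union_le _ _).trans (Nat.add_le_add_right (card_union_le _ _) _))
  rw [G.card_filter_trianglesIn_rotate P Q, hthird] at hcard
  calc (#(G.trianglesIn P) : ℝ) ≤ 3 * #{z ∈ G.trianglesIn P | Q z} := by
        exact_mod_cast hcard.trans_eq (by ring)
    _ ≤ 3 * B * #(G.adjPairsIn P) := by linarith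

theorem card_adjPairsIn_le_of_card_trianglesIn_le [DecidableEq α] {c : ℝ} (hc : 0 ≤ c)
    (h : (#(G.trianglesIn P) : ℝ) ≤ c * #(G.adjPairsIn P)) :
    (#(G.adjPairsIn P) : ℝ) ≤ (#P ^ 2 + c * #P) / 2 := by
  have hgoodman : 2 * (#(G.adjPairsIn P) : ℝ) ^ 2 ≤
      #P * (#P * #(G.adjPairsIn P) + #(G.trianglesIn P)) := by
    exact_mod_cast G.two_mul_sq_card_adjPairsIn_le P
  rcases (Nat.cast_nonneg (α := ℝ) #(G.adjPairsIn P)).eq_or_lt with hm | hm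
  · rw [← hm]
    positivity
  have : (#(G.adjPairsIn P) : ℝ) * (2 * #(G.adjPairsIn P)) ≤
      #(G.adjPairsIn P) * (#P ^ 2 + c * #P) := by
    nlinarith [Nat.cast_nonneg (α := ℝ) #P]
  linarith [le_of_mul_le_mul_left this hm]

lemma two_mul_card_image_adjPairsIn [DecidableEq α] :
    2 * #((G.adjPairsIn P).image fun z => s(z.1, z.2)) = #(G.adjPairsIn P) := by
  rw [card_eq_sum_card_image (fun z : α × α => s(z.1, z.2)), mul_comm]
  refine (sum_const_nat fun e he => ?_).symm
  obtain ⟨⟨x, y⟩, hxy, rfl⟩ := mem_image.mp he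
  have hne : x ≠ y := G.ne_of_adj (mem_adjPairsIn.mp hxy).2
  have : {z ∈ G.adjPairsIn P | s(z.1, z.2) = s(x, y)} = {(x, y), (y, x)} := by
    ext ⟨a, b⟩
    simp only [mem_adjPairsIn, mem_filter, Sym2.eq_iff, mem_insert, mem_singleton,
      Prod.mk.injEq] at hxy ⊢
    constructor
    · rintro ⟨-, h⟩
      exact h
    · rintro (⟨rfl, rfl⟩ | ⟨rfl, rfl⟩)
      · exact ⟨hxy, .inl ⟨rfl, rfl⟩⟩
      · exact ⟨⟨⟨hxy.1.2, hxy.1.1⟩, hxy.2.symm⟩, .inr ⟨rfl, rfl⟩⟩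
  rw [this, card_pair fun h => hne (Prod.ext_iff.mp h).1]

end SimpleGraph

def distGraph {α : Type*} [PseudoMetricSpace α] (S : Set ℝ) : SimpleGraph α where
  Adj p q := p ≠ q ∧ dist p q ∈ S
  symm := ⟨fun p q h => ⟨h.1.symm, dist_comm p q ▸ h.2⟩⟩
  loopless := ⟨fun _ h => h.1 rfl⟩

lemma distGraph_adj {α : Type*} [PseudoMetricSpace α] {S : Set ℝ} {p q : α} :
    (distGraph S).Adj p q ↔ p ≠ q ∧ dist p q ∈ S :=
  Iff.rfl

lemma two_mul_nearPairs (P : Finset ℝ²) (S : Set ℝ)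
    [DecidableRel (distGraph S : SimpleGraph ℝ²).Adj] :
    2 * nearPairs P S = #((distGraph S).adjPairsIn P) := by
  classical
  rw [← (distGraph S).two_mul_card_image_adjPairsIn P, nearPairs, ← Set.ncard_coe_finset]
  congr 2
  ext e
  induction e using Sym2.ind with
  | h x y =>
    simp only [Set.mem_ofPred_eq, Sym2.mk_isDiag_iff, Sym2.forall_mem_pair, Sym2.lift_mk,
      coe_image, Set.mem_image, mem_coe, SimpleGraph.mem_adjPairsIn, distGraph_adj, Sym2.eq_iff]
    constructor
    · rintro ⟨hne, hxy, hd⟩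
      exact ⟨(x, y), ⟨hxy, hne, hd⟩, .inl ⟨rfl, rfl⟩⟩
    · rintro ⟨⟨a, b⟩, hab, ⟨rfl, rfl⟩ | ⟨rfl, rfl⟩⟩
      · exact ⟨hab.2.1, hab.1, hab.2.2⟩
      · exact ⟨hab.2.1.symm, hab.1.symm, dist_comm a b ▸ hab.2.2⟩

lemma exists_longest_side {α : Type*} [PseudoMetricSpace α] (a b c : α) :
    (dist a c ≤ dist a b ∧ dist b c ≤ dist a b) ∨ (dist b a ≤ dist b c ∧ dist c a ≤ dist b c) ∨
      (dist c b ≤ dist c a ∧ dist a b ≤ dist c a) := by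
  rw [dist_comm b a, dist_comm c a, dist_comm c b]
  rcases le_total (dist a c) (dist a b) with h₁ | h₁ <;>
    rcases le_total (dist b c) (dist a b) with h₂ | h₂ <;>
    rcases le_total (dist b c) (dist a c) with h₃ | h₃
  all_goals first
    | exact .inl ⟨by linarith, by linarith⟩
    | exact .inr (.inl ⟨by linarith, by linarith⟩)
    | exact .inr (.inr ⟨by linarith, by linarith⟩)

theorem UnitSeparated.card_longest_side_le {ι : Type*} [Fintype ι] [LinearOrder ι] {δ : ℝ}
    {t : ι → ℝ} (hδ₀ : 0 < δ) (hδ₁ : δ ≤ 1) (ht : ∀ i, 1 ≤ t i) (hmono : Monotone t)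
    (hsums : AvoidsNearSums δ t) {P : Finset ℝ²} (hP : UnitSeparated (P : Set ℝ²))
    [DecidableRel (distGraph (bandUnion t) : SimpleGraph ℝ²).Adj] {x y : ℝ²}
    (hxy : (distGraph (bandUnion t)).Adj x y) :
    (#{v ∈ P | (distGraph (bandUnion t)).Adj x v ∧ (distGraph (bandUnion t)).Adj y v ∧
      dist x v ≤ dist x y ∧ dist y v ≤ dist x y} : ℝ) ≤
      2 * ((16 / δ + 2) ^ 2 + Fintype.card ι ^ 2 * (28 * (60 / δ + 2))) := by
  classical
  set V := {v ∈ P | (distGraph (bandUnion t)).Adj x v ∧ (distGraph (bandUnion t)).Adj y v ∧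
    dist x v ≤ dist x y ∧ dist y v ≤ dist x y}
  have hV : UnitSeparated (V : Set ℝ²) := hP.filter _
  have hsorted_xy : (#{v ∈ V | dist x v ≤ dist y v} : ℝ) ≤
      (16 / δ + 2) ^ 2 + Fintype.card ι ^ 2 * (28 * (60 / δ + 2)) := by
    refine (hV.filter _).card_le_of_sorted_triangles (u := x) (w := y) hδ₀ hδ₁ ht hmono hsums
      fun v hv => ?_
    obtain ⟨⟨-, hxv, hyv, -, hyvxy⟩, hxvyv⟩ := mem_filter.mp hv |>.imp_left mem_filter.mp
    exact ⟨hxv.2, hyv.2, hxy.2, hxvyv, hyvxy⟩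
  have hsorted_yx : (#{v ∈ V | dist y v ≤ dist x v} : ℝ) ≤
      (16 / δ + 2) ^ 2 + Fintype.card ι ^ 2 * (28 * (60 / δ + 2)) := by
    refine (hV.filter _).card_le_of_sorted_triangles (u := y) (w := x) hδ₀ hδ₁ ht hmono hsums
      fun v hv => ?_
    obtain ⟨⟨-, hxv, hyv, hxvxy, -⟩, hyvxv⟩ := mem_filter.mp hv |>.imp_left mem_filter.mp
    rw [dist_comm y x]
    exact ⟨hyv.2, hxv.2, hxy.2, hyvxv, hxvxy⟩
  have hcover : V ⊆ {v ∈ V | dist x v ≤ dist y v} ∪ {v ∈ V | dist y v ≤ dist x v} := by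
    intro v hv
    rcases le_total (dist x v) (dist y v) with h | h
    · exact mem_union_left _ (mem_filter.mpr ⟨hv, h⟩)
    · exact mem_union_right _ (mem_filter.mpr ⟨hv, h⟩)
  calc (#V : ℝ) ≤ #{v ∈ V | dist x v ≤ dist y v} + #{v ∈ V | dist y v ≤ dist x v} := by
        exact_mod_cast (card_le_card hcover).trans (card_union_le _ _)
    _ ≤ _ := by linarith

theorem nearly_equal_distances_plane (k : ℕ) (hk : 2 ≤ k) (δ : ℝ) (hδ : δ ∈ Set.Ioo (0:ℝ) 1) :
    ∃ (n₀ : ℕ) (C : ℝ), 0 < C ∧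
      ∀ (n : ℕ), n₀ ≤ n →
      ∀ (t : Fin k → ℝ), 1 ≤ t ⟨0, by omega⟩ → StrictMono t →
      (∀ l₁ l₂ l₃ : Fin k, l₁ ≤ l₂ → l₂ < l₃ →
        t l₃ ∉ Set.Icc ((1 - δ) * (t l₁ + t l₂)) (t l₁ + t l₂ + 2)) →
      ∀ (P : Finset (EuclideanSpace ℝ (Fin 2))), P.card = n →
        (∀ p ∈ P, ∀ q ∈ P, p ≠ q → 1 ≤ dist p q) →
        (nearPairs P (⋃ l : Fin k, Set.Icc (t l) (t l + 1)) : ℝ) ≤ (n : ℝ)^2 / 4 + C * n := by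
  classical
  obtain ⟨hδ₀, hδ₁⟩ := hδ
  set B : ℝ := (16 / δ + 2) ^ 2 + k ^ 2 * (28 * (60 / δ + 2))
  refine ⟨0, 3 / 2 * B, by positivity, ?_⟩
  rintro n - t ht₀ hmono hsums P rfl hP
  replace hP : UnitSeparated (P : Set ℝ²) := fun p hp q hq => hP p hp q hq
  have ht (i : Fin k) : 1 ≤ t i := ht₀.trans (hmono.monotone (Nat.zero_le i.val))
  let G : SimpleGraph ℝ² := distGraph (bandUnion t)
  have htriangles := G.card_trianglesIn_le_of_charge P
    (fun x y v => dist x v ≤ dist x y ∧ dist y v ≤ dist x y)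
    (fun z _ => exists_longest_side z.1.1 z.1.2 z.2)
    (fun x y hxy => by
      simpa using hP.card_longest_side_le hδ₀ hδ₁.le ht hmono.monotone hsums hxy)
  have hedges := G.card_adjPairsIn_le_of_card_trianglesIn_le P (c := 3 * (2 * B)) (by positivity)
    (by linarith)
  have hpairs : (2 * nearPairs P (bandUnion t) : ℝ) = #(G.adjPairsIn P) := by
    exact_mod_cast two_mul_nearPairs P (bandUnion t)
  change (nearPairs P (bandUnion t) : ℝ) ≤ _
  linarith
end

section
/- Let P ⊂ ℝ² be a separated set with |P| = n, and let t, C be real numbers with 1 ≤ t ≤ C. Then the number of unordered pairs {p,q} of distinct points of P with dist(p,q) ∈ [t, t+1] is at most 8(2C+1)·n. -/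
/-!
Count each pair `{p, q}` from the endpoint `p`: the other endpoint lies in the annulus
`t ≤ dist p q ≤ t + 1`. The discs of radius `1/2` around the points of `P` in that annulus are
disjoint and lie in the annulus `t - 1/2 < dist p x < t + 3/2`, of area `4π(2t + 1)`, so there
are at most `8(2t + 1) ≤ 8(2C + 1)` of them.
-/

open Metric MeasureTheory Set Finset Real

lemma measureReal_ball_fin_two (x : EuclideanSpace ℝ (Fin 2)) {r : ℝ} (hr : 0 ≤ r) :
    volume.real (ball x r) = π * r ^ 2 := by
  simp [measureReal_def, ENNReal.toReal_ofReal hr, pi_nonneg, mul_comm]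

lemma measureReal_closedBall_fin_two (x : EuclideanSpace ℝ (Fin 2)) {r : ℝ} (hr : 0 ≤ r) :
    volume.real (closedBall x r) = π * r ^ 2 := by
  simp [measureReal_def, ENNReal.toReal_ofReal hr, pi_nonneg, mul_comm]

theorem card_le_of_separated_of_dist_mem_Icc {s : Finset (EuclideanSpace ℝ (Fin 2))}
    (hsep : ∀ p ∈ s, ∀ q ∈ s, p ≠ q → 1 ≤ dist p q) {p : EuclideanSpace ℝ (Fin 2)} {t : ℝ}
    (ht : 1 / 2 ≤ t) (hs : ∀ q ∈ s, dist p q ∈ Icc t (t + 1)) :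
    (#s : ℝ) ≤ 8 * (2 * t + 1) := by
  have hdisj : (s : Set (EuclideanSpace ℝ (Fin 2))).PairwiseDisjoint (ball · (1 / 2)) := by
    intro a ha b hb hab
    exact ball_disjoint_ball (by linarith [hsep a ha b hb hab])
  have hsub : ⋃ q ∈ s, ball q (1 / 2) ⊆ ball p (t + 3 / 2) \ closedBall p (t - 1 / 2) := by
    refine iUnion₂_subset fun q hq x hx => ?_
    obtain ⟨hlo, hhi⟩ := hs q hq
    rw [mem_ball] at hx
    refine ⟨?_, ?_⟩
    · rw [mem_ball]
      linarith [dist_triangle_right x p q]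
    · rw [mem_closedBall, not_le]
      linarith [dist_triangle p x q, dist_comm p x]
  have harea : #s * (π / 4) ≤ 8 * (2 * t + 1) * (π / 4) := calc
    #s * (π / 4) = ∑ q ∈ s, volume.real (ball q (1 / 2)) := by
      rw [sum_congr rfl fun q _ => measureReal_ball_fin_two q (by norm_num), sum_const,
        nsmul_eq_mul]
      ring
    _ = volume.real (⋃ q ∈ s, ball q (1 / 2)) :=
      (measureReal_biUnion_finset hdisj fun _ _ => measurableSet_ball).symm
    _ ≤ volume.real (ball p (t + 3 / 2) \ closedBall p (t - 1 / 2)) :=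
      measureReal_mono hsub (measure_ne_top_of_subset sdiff_subset measure_ball_lt_top.ne)
    _ = 8 * (2 * t + 1) * (π / 4) := by
      rw [measureReal_sdiff (closedBall_subset_ball (by linarith)) measurableSet_closedBall,
        measureReal_ball_fin_two _ (by linarith), measureReal_closedBall_fin_two _ (by linarith)]
      ring
  exact le_of_mul_le_mul_right harea (by positivity)

theorem nearPairs_le_sum_card (P : Finset (EuclideanSpace ℝ (Fin 2))) (S : Set ℝ)
    [DecidablePred (· ∈ S)] :
    nearPairs P S ≤ ∑ p ∈ P, #{q ∈ P | q ≠ p ∧ dist p q ∈ S} := by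
  set F := P.sigma fun p => {q ∈ P | q ≠ p ∧ dist p q ∈ S}
  have hsub : {e : Sym2 (EuclideanSpace ℝ (Fin 2)) | ¬ e.IsDiag ∧ (∀ p ∈ e, p ∈ P) ∧
      Sym2.lift ⟨fun p q => dist p q, fun _ _ => dist_comm _ _⟩ e ∈ S} ⊆
      ↑(F.image fun z => s(z.1, z.2)) := by
    rintro ⟨a, b⟩ ⟨hdiag, hmem, hdist⟩
    rw [Sym2.mk_isDiag_iff] at hdiag
    refine mem_coe.mpr (mem_image.mpr ⟨⟨a, b⟩, ?_, rfl⟩)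
    simp only [F, mem_sigma, mem_filter]
    exact ⟨hmem a (Sym2.mem_mk_left a b), hmem b (Sym2.mem_mk_right a b), Ne.symm hdiag, hdist⟩
  calc nearPairs P S ≤ (F.image fun z => s(z.1, z.2)).card :=
        (ncard_le_ncard hsub (finite_toSet _)).trans_eq (ncard_coe_finset _)
    _ ≤ #F := card_image_le
    _ = ∑ p ∈ P, #{q ∈ P | q ≠ p ∧ dist p q ∈ S} := card_sigma _ _

theorem bounded_distance_pairs (P : Finset (EuclideanSpace ℝ (Fin 2))) (n : ℕ)
    (hcard : P.card = n)
    (hsep : ∀ p ∈ P, ∀ q ∈ P, p ≠ q → 1 ≤ dist p q)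
    (t C : ℝ) (ht : 1 ≤ t) (htC : t ≤ C) :
    (nearPairs P (Set.Icc t (t + 1)) : ℝ) ≤ 8 * (2 * C + 1) * n := by
  have hneighbours :
      ∀ p ∈ P, (#{q ∈ P | q ≠ p ∧ dist p q ∈ Icc t (t + 1)} : ℝ) ≤ 8 * (2 * t + 1) :=
    fun p _ => card_le_of_separated_of_dist_mem_Icc
      (fun a ha b hb => hsep a (mem_filter.mp ha).1 b (mem_filter.mp hb).1) (by linarith)
      (fun q hq => (mem_filter.mp hq).2.2)
  calc (nearPairs P (Icc t (t + 1)) : ℝ)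
      ≤ ∑ p ∈ P, (#{q ∈ P | q ≠ p ∧ dist p q ∈ Icc t (t + 1)} : ℝ) := by
        exact_mod_cast nearPairs_le_sum_card P _
    _ ≤ ∑ _p ∈ P, 8 * (2 * t + 1) := sum_le_sum hneighbours
    _ = 8 * (2 * t + 1) * n := by rw [sum_const, hcard, nsmul_eq_mul, mul_comm]
    _ ≤ 8 * (2 * C + 1) * n := by gcongr
end

section
/- Let u, v, w ∈ ℝ² with v ≠ w and u ≠ w, and suppose dist(v,w) ≤ dist(w,u). Then dist(u,v) + dist(v,w) ≤ dist(w,u) + 2·dist(w,u)·sin(∠ v w u / 2), where ∠ v w u is the angle of the triangle at the vertex w. -/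
open EuclideanGeometry Real

theorem triangle_path_bound (u v w : EuclideanSpace ℝ (Fin 2))
    (hvw : v ≠ w) (huw : u ≠ w) (h : dist v w ≤ dist w u) :
    dist u v + dist v w ≤ dist w u + 2 * dist w u * Real.sin (EuclideanGeometry.angle v w u / 2) := by
  have hθ0 := EuclideanGeometry.angle_nonneg v w u
  have hθπ := EuclideanGeometry.angle_le_pi v w u
  have hlaw := EuclideanGeometry.law_cos v w u
  have hsin : 0 ≤ Real.sin (EuclideanGeometry.angle v w u / 2) :=
    Real.sin_nonneg_of_nonneg_of_le_pi (by linarith) (by linarith [Real.pi_pos])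
  have hcos : Real.cos (EuclideanGeometry.angle v w u)
      = 1 - 2 * Real.sin (EuclideanGeometry.angle v w u / 2) ^ 2 := by
    have h2m := Real.cos_two_mul (EuclideanGeometry.angle v w u / 2)
    have hpyth := Real.sin_sq_add_cos_sq (EuclideanGeometry.angle v w u / 2)
    rw [show 2 * (EuclideanGeometry.angle v w u / 2) = EuclideanGeometry.angle v w u by ring] at h2m
    linarith
  rw [hcos] at hlaw
  rw [dist_comm v u] at hlaw
  rw [dist_comm u w] at hlaw
  have h1 : 0 ≤ dist u v := dist_nonneg
  have h2 : 0 ≤ dist v w := dist_nonneg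
  have h3 : 0 ≤ dist w u := dist_nonneg
  set a := dist v w
  set c := dist w u
  set s := Real.sin (EuclideanGeometry.angle v w u / 2)
  have key : dist u v ≤ (c - a) + 2 * c * s := by
    nlinarith [mul_nonneg (mul_nonneg (mul_nonneg h3 hsin) (sub_nonneg.2 h)) (by linarith : (0:ℝ) ≤ 1 + s),
      mul_nonneg h3 hsin, mul_nonneg h2 h3, sq_nonneg (dist u v - (c - a + 2 * c * s)),
      sq_nonneg (dist u v + (c - a + 2 * c * s))]
  linarith
end

section
/- Let δ ∈ (0,1) be real, and let u, v, w ∈ ℝ² with v ≠ w and u ≠ w satisfy dist(v,w) ≤ dist(w,u) and dist(w,u) ≤ (1 − δ/2)·(dist(u,v) + dist(v,w)). Then ∠ v w u ≥ 2·arcsin(δ/(4 − 2δ)), where ∠ v w u is the angle of the triangle at the vertex w. -/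
open EuclideanGeometry Real

theorem angle_lower_bound (δ : ℝ) (hδ : δ ∈ Set.Ioo (0:ℝ) 1)
    (u v w : EuclideanSpace ℝ (Fin 2)) (hvw : v ≠ w) (huw : u ≠ w)
    (h1 : dist v w ≤ dist w u)
    (h2 : dist w u ≤ (1 - δ / 2) * (dist u v + dist v w)) :
    2 * Real.arcsin (δ / (4 - 2 * δ)) ≤ EuclideanGeometry.angle v w u := by
  obtain ⟨hδ0, hδ1⟩ := hδ
  set a := dist v w with ha
  set c := dist w u with hc
  set b := dist u v with hb
  have ha0 : 0 < a := dist_pos.2 hvw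
  have hc0 : 0 < c := dist_pos.2 huw.symm
  have hb0 : 0 ≤ b := dist_nonneg
  have htri : b ≤ c + a := by
    calc b = dist u v := rfl
    _ ≤ dist u w + dist w v := dist_triangle u w v
    _ = c + a := by rw [dist_comm u w, dist_comm w v]
  set s := δ / (4 - 2 * δ) with hs
  have hden : (0:ℝ) < 4 - 2 * δ := by linarith
  have hs0 : 0 ≤ s := div_nonneg hδ0.le hden.le
  have hs1 : s ≤ 1 := by rw [hs, div_le_one hden]; linarith
  have hseq : s * (4 - 2 * δ) = δ := by
    rw [hs, div_mul_cancel₀ _ hden.ne']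
  have hsin : Real.sin (Real.arcsin s) = s := Real.sin_arcsin (by linarith) hs1
  have hcos2 : Real.cos (2 * Real.arcsin s) = 1 - 2 * s ^ 2 := by
    have h := Real.sin_sq_add_cos_sq (Real.arcsin s)
    rw [Real.cos_two_mul]
    nlinarith [h]
  have h3 : δ / 2 * (a + b) ≤ a + b - c := by linarith
  have h4 : 2 * c ≤ (2 - δ) * (a + b) := by linarith
  have h5 : δ * (a + b) ≤ 2 * b := by nlinarith
  have habc : 0 ≤ a + b - c := by
    have : 0 ≤ δ / 2 * (a + b) := by positivity
    linarith
  have hbb : b ≤ b + c - a := by linarith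
  have key : 4 * (a * c) * s ^ 2 ≤ (a + b - c) * (b + c - a) := by
    have hkey : a * c * δ ^ 2 ≤ (a + b - c) * (b + c - a) * (2 - δ) ^ 2 := by
      have st1 : a * c * δ ^ 2 ≤ c ^ 2 * δ ^ 2 := by
        nlinarith [mul_le_mul_of_nonneg_right h1 (mul_nonneg hc0.le (sq_nonneg δ))]
      have st2 : c ^ 2 * δ ^ 2 ≤ (2 - δ) ^ 2 * (a + b) ^ 2 * δ ^ 2 / 4 := by
        have hsq := mul_self_le_mul_self (by linarith : (0:ℝ) ≤ 2 * c) h4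
        nlinarith [mul_le_mul_of_nonneg_right hsq (sq_nonneg δ)]
      have st3 : (2 - δ) ^ 2 * (a + b) ^ 2 * δ ^ 2 / 4 ≤
          (2 - δ) ^ 2 * (a + b) * b * δ / 2 := by
        have hfac : 0 ≤ (2 - δ) ^ 2 * (a + b) * δ / 4 := by positivity
        calc (2 - δ) ^ 2 * (a + b) ^ 2 * δ ^ 2 / 4
            = ((2 - δ) ^ 2 * (a + b) * δ / 4) * (δ * (a + b)) := by ring
          _ ≤ ((2 - δ) ^ 2 * (a + b) * δ / 4) * (2 * b) :=
              mul_le_mul_of_nonneg_left h5 hfac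
          _ = (2 - δ) ^ 2 * (a + b) * b * δ / 2 := by ring
      have st4 : (2 - δ) ^ 2 * (a + b) * b * δ / 2 ≤
          (a + b - c) * (b + c - a) * (2 - δ) ^ 2 := by
        have hmm : δ / 2 * (a + b) * b ≤ (a + b - c) * (b + c - a) :=
          mul_le_mul h3 hbb hb0 habc
        calc (2 - δ) ^ 2 * (a + b) * b * δ / 2
            = (2 - δ) ^ 2 * (δ / 2 * (a + b) * b) := by ring
          _ ≤ (2 - δ) ^ 2 * ((a + b - c) * (b + c - a)) :=
              mul_le_mul_of_nonneg_left hmm (sq_nonneg _)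
          _ = (a + b - c) * (b + c - a) * (2 - δ) ^ 2 := by ring
      linarith
    have hdsq : δ ^ 2 = 4 * s ^ 2 * (2 - δ) ^ 2 := by
      linear_combination (-(s * (4 - 2 * δ) + δ)) * hseq
    have h2d : (0:ℝ) < (2 - δ) ^ 2 := by
      have : (0:ℝ) < 2 - δ := by linarith
      positivity
    have h' : (4 * (a * c) * s ^ 2) * (2 - δ) ^ 2 ≤
        ((a + b - c) * (b + c - a)) * (2 - δ) ^ 2 := by
      calc (4 * (a * c) * s ^ 2) * (2 - δ) ^ 2 = a * c * (4 * s ^ 2 * (2 - δ) ^ 2) := by ring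
        _ = a * c * δ ^ 2 := by rw [← hdsq]
        _ ≤ (a + b - c) * (b + c - a) * (2 - δ) ^ 2 := hkey
        _ = ((a + b - c) * (b + c - a)) * (2 - δ) ^ 2 := by ring
    exact le_of_mul_le_mul_right h' h2d
  have hlaw := EuclideanGeometry.law_cos v w u
  rw [dist_comm v u, dist_comm u w] at hlaw
  rw [← ha, ← hb, ← hc] at hlaw
  have hexp : (a + b - c) * (b + c - a) = b ^ 2 - a ^ 2 - c ^ 2 + 2 * (a * c) := by ring
  rw [hexp] at key
  have hcos : Real.cos (∠ v w u) ≤ 1 - 2 * s ^ 2 := by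
    refine le_of_mul_le_mul_left ?_ (by positivity : (0:ℝ) < 2 * a * c)
    calc 2 * a * c * Real.cos (∠ v w u) = a ^ 2 + c ^ 2 - b ^ 2 := by linarith [hlaw]
      _ ≤ 2 * (a * c) - 4 * (a * c) * s ^ 2 := by linarith [key]
      _ = 2 * a * c * (1 - 2 * s ^ 2) := by ring
  by_contra hlt
  push_neg at hlt
  have h0 : 0 ≤ ∠ v w u := EuclideanGeometry.angle_nonneg _ _ _
  have hpi : 2 * Real.arcsin s ≤ π := by
    have := Real.arcsin_le_pi_div_two s; linarith
  have hc2 := Real.cos_lt_cos_of_nonneg_of_le_pi h0 hpi hlt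
  rw [hcos2] at hc2
  linarith
end

section
/- Let δ ∈ (0,1) be real, and let u, v, w ∈ ℝ² satisfy max{dist(u,v), dist(v,w)} < dist(w,u) and dist(w,u) ≤ (1 − δ/2)·(dist(u,v) + dist(v,w)). Set δ₁ = 2·arcsin(δ/(4 − 2δ)). Then u, v, w are not collinear, the angles at w and at u satisfy ∠ v w u ≥ δ₁ and ∠ w u v ≥ δ₁, and the angle at v satisfies ∠ u v w ≤ π − 2δ₁. -/
/-!
Write `x = |uv|`, `y = |vw|`, `c = |wu|`, `t = δ / (4 - 2δ)` and `W` for the angle at `w`. The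
hypothesis gives `x + y - c ≥ δc / (2 - δ)`, and `y ≤ c` gives `x + c - y ≥ x + y - c`, so
`x² - (y - c)² ≥ (δc / (2 - δ))² ≥ 4t²yc`. By the half-angle formula
`sin² (W / 2) = (x² - (y - c)²) / (4yc)`, hence `W ≥ 2 arcsin t`; symmetrically at `u`. The angle
sum bounds the angle at `v`, and the strict triangle inequality `c < x + y` rules out collinearity.
-/

open EuclideanGeometry Real

theorem cos_two_mul_arcsin {t : ℝ} (ht : |t| ≤ 1) : cos (2 * arcsin t) = 1 - 2 * t ^ 2 := by
  have h : 0 ≤ 1 - t ^ 2 := by nlinarith [sq_abs t, abs_nonneg t]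
  rw [cos_two_mul, cos_arcsin, sq_sqrt h]
  ring

theorem four_mul_sq_div_mul_le_sq_sub_sq {δ x y c : ℝ} (hδ₀ : 0 ≤ δ) (hδ₂ : δ < 2)
    (hc : 0 ≤ c) (hyc : y ≤ c) (h : c ≤ (1 - δ / 2) * (x + y)) :
    4 * (δ / (4 - 2 * δ)) ^ 2 * (y * c) ≤ x ^ 2 - (y - c) ^ 2 := by
  have h2δ : 0 < 2 - δ := by linarith
  set s := δ * c / (2 - δ) with hs
  have hs₀ : 0 ≤ s := by positivity
  have hs₁ : s ≤ x + y - c := by rw [hs, div_le_iff₀ h2δ]; nlinarith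
  calc 4 * (δ / (4 - 2 * δ)) ^ 2 * (y * c) = s ^ 2 * (y / c) := by
        rcases hc.eq_or_lt with rfl | hc
        · simp
        · rw [hs, show 4 - 2 * δ = 2 * (2 - δ) by ring]; field_simp; ring
    _ ≤ s ^ 2 := mul_le_of_le_one_right (sq_nonneg s) (div_le_one_of_le₀ hyc hc)
    _ ≤ (x + y - c) * (x - y + c) := by
        rw [sq]; exact mul_le_mul hs₁ (by linarith) hs₀ (by linarith)
    _ = x ^ 2 - (y - c) ^ 2 := by ring

section

variable {V P : Type*} [NormedAddCommGroup V] [InnerProductSpace ℝ V] [MetricSpace P]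
  [NormedAddTorsor V P]

theorem two_mul_arcsin_le_angle {p q r : P} {t : ℝ} (ht : t ∈ Set.Icc (0 : ℝ) 1)
    (hpq : p ≠ q) (hrq : r ≠ q)
    (h : 4 * t ^ 2 * (dist p q * dist r q) ≤ dist p r ^ 2 - (dist p q - dist r q) ^ 2) :
    2 * arcsin t ≤ ∠ p q r := by
  have hpos : 0 < dist p q * dist r q := mul_pos (dist_pos.2 hpq) (dist_pos.2 hrq)
  have hcos : cos (∠ p q r) ≤ cos (2 * arcsin t) := by
    rw [cos_two_mul_arcsin (abs_le.2 ⟨by linarith [ht.1], ht.2⟩)]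
    have := law_cos p q r
    nlinarith
  refine (strictAntiOn_cos.le_iff_ge ⟨angle_nonneg p q r, angle_le_pi p q r⟩ ?_).1 hcos
  constructor
  · linarith [arcsin_nonneg.2 ht.1]
  · linarith [arcsin_le_pi_div_two t]

end

theorem not_collinear_of_dist_lt_dist_add_dist {V P : Type*} [NormedAddCommGroup V]
    [NormedSpace ℝ V] [MetricSpace P] [NormedAddTorsor V P] {u v w : P}
    (hu : dist u v < dist w u) (hv : dist v w < dist w u)
    (hw : dist w u < dist u v + dist v w) : ¬ Collinear ℝ ({u, v, w} : Set P) := by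
  intro hcol
  rcases hcol.wbtw_or_wbtw_or_wbtw with h | h | h
  · linarith [h.dist_add_dist, dist_comm u w]
  · linarith [h.dist_add_dist, dist_comm u v]
  · linarith [h.dist_add_dist, dist_comm v w]

theorem nondegenerate_triangle_angles (δ : ℝ) (hδ : δ ∈ Set.Ioo (0:ℝ) 1)
    (u v w : EuclideanSpace ℝ (Fin 2))
    (hmax : max (dist u v) (dist v w) < dist w u)
    (h2 : dist w u ≤ (1 - δ / 2) * (dist u v + dist v w)) :
    ¬ Collinear ℝ ({u, v, w} : Set (EuclideanSpace ℝ (Fin 2))) ∧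
    2 * Real.arcsin (δ / (4 - 2 * δ)) ≤ EuclideanGeometry.angle v w u ∧
    2 * Real.arcsin (δ / (4 - 2 * δ)) ≤ EuclideanGeometry.angle w u v ∧
    EuclideanGeometry.angle u v w ≤ π - 2 * (2 * Real.arcsin (δ / (4 - 2 * δ))) := by
  obtain ⟨hδ₀, hδ₁⟩ := hδ
  obtain ⟨huv, hvw⟩ := max_lt_iff.1 hmax
  have hvu : v ≠ u := fun h => hvw.ne (by rw [h, dist_comm])
  have hvw' : v ≠ w := fun h => huv.ne (by rw [h, dist_comm])
  have hwu : w ≠ u := fun h => (dist_nonneg.trans_lt hvw).ne' (by rw [h, dist_self])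
  have ht : δ / (4 - 2 * δ) ∈ Set.Icc (0 : ℝ) 1 :=
    ⟨div_nonneg hδ₀.le (by linarith), by rw [div_le_one₀ (by linarith)]; linarith⟩
  have hw : 2 * arcsin (δ / (4 - 2 * δ)) ≤ ∠ v w u := by
    refine two_mul_arcsin_le_angle ht hvw' hwu.symm ?_
    rw [dist_comm u w, dist_comm v u]
    exact four_mul_sq_div_mul_le_sq_sub_sq hδ₀.le (by linarith) dist_nonneg hvw.le h2
  have hu : 2 * arcsin (δ / (4 - 2 * δ)) ≤ ∠ w u v := by
    rw [angle_comm]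
    refine two_mul_arcsin_le_angle ht hvu hwu ?_
    rw [dist_comm v u]
    exact four_mul_sq_div_mul_le_sq_sub_sq hδ₀.le (by linarith) dist_nonneg huv.le
      (by linarith)
  have hsum := angle_add_angle_add_angle_eq_pi w hvu
  have hstrict : dist w u < dist u v + dist v w := by
    nlinarith [dist_pos.2 hvu, dist_pos.2 hvw']
  exact ⟨not_collinear_of_dist_lt_dist_add_dist huv hvw hstrict, hw, hu, by linarith⟩
end

section
/- Let C > 0 and let t₁, t₂ be real numbers with C ≤ t₁ ≤ t₂. Let u, v, w ∈ ℝ² be pairwise distinct points with dist(w,u) ∈ [t₂, t₂+1], dist(u,v) ∈ [t₁, t₁+1] and dist(v,w) ∈ [t₂, t₂+1]. Then the cosine of the angle at u satisfies cos(∠ v u w) ≤ 1/2 + 2/C + 1/C². -/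
open EuclideanGeometry Real

theorem cos_angle_upper_bound (C t₁ t₂ : ℝ) (hC : 0 < C) (ht₁ : C ≤ t₁) (ht₂ : t₁ ≤ t₂)
    (u v w : EuclideanSpace ℝ (Fin 2))
    (huv : u ≠ v) (hvw : v ≠ w) (huw : u ≠ w)
    (hwu : dist w u ∈ Set.Icc t₂ (t₂ + 1))
    (huv' : dist u v ∈ Set.Icc t₁ (t₁ + 1))
    (hvw' : dist v w ∈ Set.Icc t₂ (t₂ + 1)) :
    Real.cos (EuclideanGeometry.angle v u w) ≤ 1 / 2 + 2 / C + 1 / C ^ 2 := by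
  obtain ⟨hc1, hc2⟩ := hwu
  obtain ⟨hb1, hb2⟩ := huv'
  obtain ⟨ha1, ha2⟩ := hvw'
  have hcos := EuclideanGeometry.law_cos v u w
  have hb : 0 < dist v u := dist_pos.mpr (Ne.symm huv)
  have hc : 0 < dist w u := dist_pos.mpr (Ne.symm huw)
  rw [dist_comm v u] at hcos hb
  set b := dist u v with hbdef
  set c := dist w u with hcdef
  set a := dist v w with hadef
  have key : Real.cos (EuclideanGeometry.angle v u w) * (2 * b * c) = b ^ 2 + c ^ 2 - a ^ 2 := by
    linarith [hcos]
  have h2 : (b ^ 2 + c ^ 2 - a ^ 2) * C ^ 2 ≤ (C ^ 2 + 4 * C + 2) * (b * c) := by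
    have hbC : C ≤ b := le_trans ht₁ hb1
    have hcC : C ≤ c := le_trans (ht₁.trans ht₂) hc1
    have s1 : c ^ 2 - a ^ 2 ≤ c + a := by nlinarith
    have s2 : b ^ 2 - b * c ≤ b := by nlinarith
    have p1 : C * b ≤ b * c := by nlinarith
    have p2 : C * c ≤ b * c := by nlinarith
    have p3 : C * C ≤ b * c := mul_le_mul hbC hcC hC.le (hC.le.trans hbC)
    have hac : a ≤ c + 1 := by linarith
    nlinarith [mul_le_mul_of_nonneg_left s1 (sq_nonneg C), mul_le_mul_of_nonneg_left s2 (sq_nonneg C),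
      mul_le_mul_of_nonneg_left p1 hC.le, mul_le_mul_of_nonneg_left p2 hC.le,
      mul_le_mul_of_nonneg_left hac (sq_nonneg C), mul_pos hb hc, mul_pos (mul_pos hC hb) hc]
  have hC2 : (0:ℝ) < C ^ 2 := by positivity
  have hbc : (0:ℝ) < b * c := mul_pos hb hc
  have h3 : Real.cos (EuclideanGeometry.angle v u w) * (2 * C ^ 2) ≤ C ^ 2 + 4 * C + 2 := by
    nlinarith [key, h2, hbc]
  have heq : 1 / 2 + 2 / C + 1 / C ^ 2 = (C ^ 2 + 4 * C + 2) / (2 * C ^ 2) := by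
    field_simp
    ring
  rw [heq, le_div_iff₀ (by positivity)]
  linarith
end

section
/- Let C > 0 and let t₁, t₂ be real numbers with C ≤ t₁ ≤ t₂. Let u, v, w ∈ ℝ² be pairwise distinct points with dist(w,u) ∈ [t₂, t₂+1], dist(u,v) ∈ [t₁, t₁+1] and dist(v,w) ∈ [t₂, t₂+1]. Then the cosine of the angle at u satisfies cos(∠ v u w) ≥ −(1/C + 1/(2C²)). -/
open EuclideanGeometry Real

theorem cos_angle_lower_bound (C t₁ t₂ : ℝ) (hC : 0 < C) (ht₁ : C ≤ t₁) (ht₂ : t₁ ≤ t₂)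
    (u v w : EuclideanSpace ℝ (Fin 2))
    (huv : u ≠ v) (hvw : v ≠ w) (huw : u ≠ w)
    (hwu : dist w u ∈ Set.Icc t₂ (t₂ + 1))
    (huv' : dist u v ∈ Set.Icc t₁ (t₁ + 1))
    (hvw' : dist v w ∈ Set.Icc t₂ (t₂ + 1)) :
    -(1 / C + 1 / (2 * C ^ 2)) ≤ Real.cos (EuclideanGeometry.angle v u w) := by
  have hc := EuclideanGeometry.law_cos v u w
  rw [dist_comm v u] at hc
  obtain ⟨hb1, hb2⟩ := hwu
  obtain ⟨ha1, ha2⟩ := huv'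
  obtain ⟨hc1, hc2⟩ := hvw'
  have ht2 : 0 < t₂ := lt_of_lt_of_le hC (ht₁.trans ht₂)
  have ht1 : 0 < t₁ := lt_of_lt_of_le hC ht₁
  have hapos : 0 < dist u v := dist_pos.mpr huv
  have hbpos : 0 < dist w u := dist_pos.mpr (Ne.symm huw)
  have key : Real.cos (EuclideanGeometry.angle v u w)
      = (dist u v ^ 2 + dist w u ^ 2 - dist v w ^ 2) / (2 * dist u v * dist w u) := by
    field_simp
    linarith [hc]
  rw [key, le_div_iff₀ (by positivity)]
  have hKpos : 0 < 1 / C + 1 / (2 * C ^ 2) := by positivity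
  have hcv : 0 ≤ dist v w := dist_nonneg
  have hK2 : 2 * t₂ + 1 ≤ (1 / C + 1 / (2 * C ^ 2)) * (2 * t₁ * t₂) := by
    have e : (1 / C + 1 / (2 * C ^ 2)) * (2 * t₁ * t₂) = 2 * t₁ * t₂ / C + t₁ * t₂ / C ^ 2 := by
      field_simp
    have h1 : 2 * t₂ ≤ 2 * t₁ * t₂ / C := by
      rw [le_div_iff₀ hC]; nlinarith
    have h2 : (1 : ℝ) ≤ t₁ * t₂ / C ^ 2 := by
      rw [le_div_iff₀ (by positivity)]; nlinarith
    linarith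
  have hD : (1 / C + 1 / (2 * C ^ 2)) * (2 * t₁ * t₂) ≤ (1 / C + 1 / (2 * C ^ 2)) * (2 * dist u v * dist w u) := by
    have : t₁ * t₂ ≤ dist u v * dist w u :=
      mul_le_mul ha1 hb1 ht2.le hapos.le
    nlinarith
  have hA : t₂ ^ 2 ≤ dist w u ^ 2 := pow_le_pow_left₀ ht2.le hb1 2
  have hB : dist v w ^ 2 ≤ (t₂ + 1) ^ 2 := pow_le_pow_left₀ hcv hc2 2
  nlinarith [sq_nonneg (dist u v)]
end

section
/- For every real δ ∈ (0, π/2) there exist constants R = R(δ) > 0 and M = M(δ) > 0 with the following property. Let x, z ∈ ℝ², let r₁, r₂ ≥ R be real numbers, and let S ⊂ ℝ² be a separated set such that every point y ∈ S satisfies |dist(x,y) − r₁| ≤ 1, |dist(z,y) − r₂| ≤ 1, and δ ≤ ∠ x y z ≤ π − δ. Then |S| ≤ M. -/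
open EuclideanGeometry Real MeasureTheory Metric ENNReal RealInnerProductSpace

local notation "E2" => EuclideanSpace ℝ (Fin 2)

lemma packing_lemma (D : ℝ) : ∃ N : ℝ, 0 < N ∧ ∀ (S : Finset E2),
    (∀ p ∈ S, ∀ q ∈ S, p ≠ q → 1 ≤ dist p q) →
    (∀ p ∈ S, ∀ q ∈ S, dist p q ≤ D) → (S.card : ℝ) ≤ N := by
  set v : ℝ≥0∞ := volume (ball (0 : E2) (1/2)) with hv
  set V : ℝ≥0∞ := volume (ball (0 : E2) (D + 1)) with hV
  have hv0 : v ≠ 0 := (measure_ball_pos volume _ (by norm_num)).ne'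
  have hvt : v ≠ ⊤ := measure_ball_lt_top.ne
  have hVt : V ≠ ⊤ := measure_ball_lt_top.ne
  refine ⟨(V / v).toReal + 1, by positivity, fun S hsep hdiam => ?_⟩
  rcases S.eq_empty_or_nonempty with rfl | ⟨y₀, hy₀⟩
  · simp only [Finset.card_empty, Nat.cast_zero]
    have : (0:ℝ) ≤ (V/v).toReal := ENNReal.toReal_nonneg
    linarith
  have hdisj : (S : Set E2).PairwiseDisjoint (fun p => ball p (1/2)) := by
    intro p hp q hq hpq
    exact ball_disjoint_ball (by linarith [hsep p hp q hq hpq])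
  have hsub : ∀ p ∈ S, ball p (1/2) ⊆ ball y₀ (D + 1) := by
    intro p hp w hw
    rw [mem_ball] at hw ⊢
    calc dist w y₀ ≤ dist w p + dist p y₀ := dist_triangle _ _ _
      _ ≤ 1/2 + D := by
          have := hdiam p hp y₀ hy₀
          rw [dist_comm w p] at hw ⊢
          linarith [dist_comm p w ▸ hw]
      _ < D + 1 := by linarith
  have key : (S.card : ℝ≥0∞) * v ≤ V := by
    have h1 : volume (⋃ p ∈ S, ball p (1/2)) = ∑ p ∈ S, volume (ball p (1/2)) :=
      measure_biUnion_finset hdisj (fun p _ => measurableSet_ball)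
    have h2 : ∀ p ∈ S, volume (ball p (1/2)) = v := fun p _ => by
      rw [hv, Measure.addHaar_ball_center]
    have h3 : volume (⋃ p ∈ S, ball p (1/2)) ≤ volume (ball y₀ (D + 1)) :=
      measure_mono (Set.iUnion₂_subset hsub)
    rw [h1, Finset.sum_congr rfl h2, Finset.sum_const, nsmul_eq_mul] at h3
    rw [hV, ← Measure.addHaar_ball_center volume y₀]
    exact h3
  have hle : (S.card : ℝ≥0∞) ≤ V / v := ENNReal.le_div_iff_mul_le (Or.inl hv0) (Or.inl hvt) |>.2 key
  have hfin : V / v ≠ ⊤ := by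
    intro h
    rw [ENNReal.div_eq_top] at h
    rcases h with ⟨_, h⟩ | ⟨h, _⟩
    · exact hv0 h
    · exact hVt h
  have := ENNReal.toReal_mono hfin hle
  simp only [ENNReal.toReal_natCast] at this
  linarith

noncomputable def omg (a b : E2) : ℝ := a 0 * b 1 - a 1 * b 0

lemma inner_coord (a b : E2) : ⟪a, b⟫ = a 0 * b 0 + a 1 * b 1 := by
  simp [PiLp.inner_apply, Fin.sum_univ_two, RCLike.inner_apply, conj_trivial, mul_comm]

lemma lagrange (a b : E2) : ⟪a, b⟫ ^ 2 + omg a b ^ 2 = ‖a‖ ^ 2 * ‖b‖ ^ 2 := by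
  have ha : ‖a‖ ^ 2 = a 0 * a 0 + a 1 * a 1 := by
    rw [← real_inner_self_eq_norm_sq, inner_coord]
  have hb : ‖b‖ ^ 2 = b 0 * b 0 + b 1 * b 1 := by
    rw [← real_inner_self_eq_norm_sq, inner_coord]
  rw [inner_coord, ha, hb, omg]; ring

lemma omg_sub_left (a b m : E2) : omg (a - b) m = omg a m - omg b m := by
  simp [omg, PiLp.sub_apply]; ring

lemma omg_self_sub (a m : E2) : omg a (a - m) = -omg a m := by
  simp [omg, PiLp.sub_apply]; ring

lemma sin_ge_sin (δ θ : ℝ) (h0 : 0 < δ) (h2 : δ < π/2) (h3 : δ ≤ θ) (h4 : θ ≤ π - δ) :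
    Real.sin δ ≤ Real.sin θ := by
  rcases le_or_gt θ (π/2) with h | h
  · exact Real.sin_le_sin_of_le_of_le_pi_div_two (by linarith) h h3
  · rw [← Real.sin_pi_sub θ]
    exact Real.sin_le_sin_of_le_of_le_pi_div_two (by linarith) (by linarith) (by linarith)

lemma abs_omg_eq (a b : E2) :
    |omg a b| = Real.sin (InnerProductGeometry.angle a b) * (‖a‖ * ‖b‖) := by
  rw [InnerProductGeometry.sin_angle_mul_norm_mul_norm]
  have : ⟪a, a⟫ * ⟪b, b⟫ - ⟪a, b⟫ * ⟪a, b⟫ = omg a b ^ 2 := by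
    have := lagrange a b
    rw [real_inner_self_eq_norm_sq, real_inner_self_eq_norm_sq]
    nlinarith [this]
  rw [this, Real.sqrt_sq_eq_abs]

lemma angle_eq (x y z : E2) :
    EuclideanGeometry.angle x y z = InnerProductGeometry.angle (y - x) (y - z) := by
  rw [EuclideanGeometry.angle, vsub_eq_sub, vsub_eq_sub,
    ← InnerProductGeometry.angle_neg_neg, neg_sub, neg_sub]

lemma same_sign_key (g B q₁ q₂ : ℝ) (hg : 0 < g) (hB : 0 ≤ B) (h₁ : g ≤ q₁) (h₂ : g ≤ q₂)
    (hup : q₂ ^ 2 - q₁ ^ 2 ≤ B) : (q₂ - q₁) * (2 * g) ≤ B := by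
  rcases le_total q₂ q₁ with h | h
  · nlinarith
  · nlinarith [mul_nonneg (sub_nonneg.2 h) (by linarith : (0:ℝ) ≤ q₂ + q₁ - 2 * g)]

lemma same_sign_diff (q₁ q₂ g B : ℝ) (hg : 0 < g) (h₁ : g ≤ |q₁|) (h₂ : g ≤ |q₂|)
    (hsign : 0 < q₁ * q₂) (hB : |q₂ ^ 2 - q₁ ^ 2| ≤ B) : |q₂ - q₁| ≤ B / (2 * g) := by
  have hB0 : (0:ℝ) ≤ B := le_trans (abs_nonneg _) hB
  rw [abs_le] at hB ⊢
  have h2g : (0:ℝ) < 2 * g := by linarith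
  have main : (q₂ - q₁) * (2 * g) ≤ B ∧ (q₁ - q₂) * (2 * g) ≤ B := by
    rcases lt_or_ge 0 q₁ with hq | hq
    · have hq2 : 0 < q₂ := by nlinarith
      have hg1 : g ≤ q₁ := by rwa [abs_of_pos hq] at h₁
      have hg2 : g ≤ q₂ := by rwa [abs_of_pos hq2] at h₂
      exact ⟨same_sign_key g B q₁ q₂ hg hB0 hg1 hg2 hB.2,
        same_sign_key g B q₂ q₁ hg hB0 hg2 hg1 (by linarith [hB.1])⟩
    · have hq1 : q₁ < 0 := lt_of_le_of_ne hq (by intro h; rw [h] at h₁; simp at h₁; linarith)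
      have hq2 : q₂ < 0 := by nlinarith
      have hg1 : g ≤ -q₁ := by rwa [abs_of_neg hq1] at h₁
      have hg2 : g ≤ -q₂ := by rwa [abs_of_neg hq2] at h₂
      constructor
      · have := same_sign_key g B (-q₂) (-q₁) hg hB0 hg2 hg1 (by nlinarith [hB.1])
        nlinarith
      · have := same_sign_key g B (-q₁) (-q₂) hg hB0 hg1 hg2 (by nlinarith [hB.2])
        nlinarith
  constructor
  · have : q₁ - q₂ ≤ B / (2 * g) := (le_div_iff₀ h2g).2 main.2
    linarith
  · exact (le_div_iff₀ h2g).2 main.1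

lemma hnum_aux (r₁ r₂ : ℝ) (h1 : 3 ≤ r₁) (h2 : 3 ≤ r₂) :
    4 * r₁ * (r₂ + 1) ^ 2 + (r₁ + 1) ^ 2 * (4 * r₂)
      + 2 * ((r₁ + 1) * (r₂ + 1)) * (2 * r₁ + 2 * r₂)
      ≤ 48 * (r₁ + r₂ - 2) * ((r₁ - 1) * (r₂ - 1)) := by
  have ha : (0:ℝ) ≤ r₁ - 3 := by linarith
  have hb : (0:ℝ) ≤ r₂ - 3 := by linarith
  nlinarith [mul_nonneg ha hb, mul_nonneg (mul_nonneg ha ha) hb,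
    mul_nonneg (mul_nonneg ha hb) hb, mul_nonneg ha ha, mul_nonneg hb hb]

lemma sq_bounds_aux {u r : ℝ} (h3 : 3 ≤ r) (hl : r - 1 ≤ u) (hu : u ≤ r + 1) :
    (r - 1) ^ 2 ≤ u ^ 2 ∧ u ^ 2 ≤ (r + 1) ^ 2 :=
  ⟨by nlinarith, by nlinarith⟩

lemma cancel_pos_aux {X Y T : ℝ} (hT : 0 < T) (h : X * T ≤ Y * T) : X ≤ Y :=
  le_of_mul_le_mul_right h hT

lemma norm2_aux (P W X t s : ℝ) (hs : 0 < s) (hlag : P ^ 2 + W ^ 2 = X)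
    (hP2 : P ^ 2 ≤ (3 * t) ^ 2) (hW2 : W ^ 2 ≤ (24 * t / s) ^ 2) :
    X ≤ t ^ 2 * (3 + 24 / s) ^ 2 := by
  have hexp : t ^ 2 * (3 + 24 / s) ^ 2 = (3 * t) ^ 2 + (24 * t / s) ^ 2 + 144 * t ^ 2 / s := by
    field_simp; ring
  have hcross : 0 ≤ 144 * t ^ 2 / s := by positivity
  linarith [hlag, hP2, hW2, hcross, hexp.le, hexp.ge]

set_option maxHeartbeats 2000000 in
theorem bounded_points_in_annuli_intersection (δ : ℝ) (hδ : δ ∈ Set.Ioo (0:ℝ) (π / 2)) :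
    ∃ (R M : ℝ), 0 < R ∧ 0 < M ∧
      ∀ (x z : EuclideanSpace ℝ (Fin 2)) (r₁ r₂ : ℝ), R ≤ r₁ → R ≤ r₂ →
      ∀ (S : Finset (EuclideanSpace ℝ (Fin 2))),
        (∀ p ∈ S, ∀ q ∈ S, p ≠ q → 1 ≤ dist p q) →
        (∀ y ∈ S, |dist x y - r₁| ≤ 1 ∧ |dist z y - r₂| ≤ 1 ∧
          δ ≤ EuclideanGeometry.angle x y z ∧ EuclideanGeometry.angle x y z ≤ π - δ) →
        (S.card : ℝ) ≤ M := by
  classical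
  obtain ⟨hδ0, hδ2⟩ := hδ
  have hπ := Real.pi_pos
  set s := Real.sin δ with hs_def
  set c := Real.cos δ with hc_def
  have hs : 0 < s := Real.sin_pos_of_pos_of_lt_pi hδ0 (by linarith)
  have hc0 : 0 ≤ c := Real.cos_nonneg_of_mem_Icc ⟨by linarith, hδ2.le⟩
  have hc1 : c < 1 := by
    have h := Real.cos_lt_cos_of_nonneg_of_le_pi (le_refl 0) (by linarith) hδ0
    simpa using h
  set D := Real.sqrt (2 * (3 + 24 / s) ^ 2 / (1 - c)) with hD_def
  obtain ⟨N, hN0, hN⟩ := packing_lemma D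
  refine ⟨3, 2 * N, by norm_num, by linarith, ?_⟩
  intro x z r₁ r₂ hr₁ hr₂ S hsep hS
  set Q : E2 → ℝ := fun y => omg (y - x) (y - z) with hQdef
  set g := s * ((r₁ - 1) * (r₂ - 1)) with hg_def
  have hg : 0 < g := by
    apply _root_.mul_pos hs; apply _root_.mul_pos <;> linarith
  -- per point facts
  have point : ∀ y ∈ S,
      (r₁ - 1 ≤ ‖y - x‖ ∧ ‖y - x‖ ≤ r₁ + 1) ∧ (r₂ - 1 ≤ ‖y - z‖ ∧ ‖y - z‖ ≤ r₂ + 1) ∧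
      g ≤ |Q y| ∧ ⟪y - x, y - z⟫ ≤ c * (‖y - x‖ * ‖y - z‖) := by
    intro y hy
    obtain ⟨h1, h2, h3, h4⟩ := hS y hy
    rw [abs_le] at h1 h2
    have hax : ‖y - x‖ = dist x y := by rw [dist_eq_norm, norm_sub_rev]
    have hbz : ‖y - z‖ = dist z y := by rw [dist_eq_norm, norm_sub_rev]
    have hA : r₁ - 1 ≤ ‖y - x‖ ∧ ‖y - x‖ ≤ r₁ + 1 := by
      rw [hax]; constructor <;> linarith
    have hB : r₂ - 1 ≤ ‖y - z‖ ∧ ‖y - z‖ ≤ r₂ + 1 := by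
      rw [hbz]; constructor <;> linarith
    have hθeq := angle_eq x y z
    rw [hθeq] at h3 h4
    set θ := InnerProductGeometry.angle (y - x) (y - z) with hθdef
    have hsin : s ≤ Real.sin θ := sin_ge_sin δ θ hδ0 hδ2 h3 h4
    have hcos : Real.cos θ ≤ c :=
      Real.cos_le_cos_of_nonneg_of_le_pi (le_of_lt hδ0) (by linarith) h3
    refine ⟨hA, hB, ?_, ?_⟩
    · have homg := abs_omg_eq (y - x) (y - z)
      rw [← hθdef] at homg
      have h5 : s * ((r₁ - 1) * (r₂ - 1)) ≤ Real.sin θ * (‖y - x‖ * ‖y - z‖) := by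
        have hsinpos : 0 < Real.sin θ := lt_of_lt_of_le hs hsin
        have : (r₁ - 1) * (r₂ - 1) ≤ ‖y - x‖ * ‖y - z‖ := by
          apply mul_le_mul hA.1 hB.1 (by linarith) (by linarith [hA.1])
        calc s * ((r₁ - 1) * (r₂ - 1)) ≤ Real.sin θ * ((r₁ - 1) * (r₂ - 1)) := by
              exact mul_le_mul_of_nonneg_right hsin
                (mul_nonneg (by linarith) (by linarith))
          _ ≤ Real.sin θ * (‖y - x‖ * ‖y - z‖) := by
              apply mul_le_mul_of_nonneg_left this hsinpos.le
      rw [hg_def, hQdef]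
      simpa [homg] using h5
    · have hcc := InnerProductGeometry.cos_angle_mul_norm_mul_norm (y - x) (y - z)
      rw [← hθdef] at hcc
      have hnn : 0 ≤ ‖y - x‖ * ‖y - z‖ := by positivity
      linarith [hcc, mul_le_mul_of_nonneg_right hcos hnn]
  -- pairwise bound within a sign class
  have pair : ∀ y₁ ∈ S, ∀ y₂ ∈ S, 0 < Q y₁ * Q y₂ → dist y₁ y₂ ≤ D := by
    intro y₁ hy₁ y₂ hy₂ hsign
    obtain ⟨⟨ha1l, ha1u⟩, ⟨hb1l, hb1u⟩, hQ1, hI1c⟩ := point y₁ hy₁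
    obtain ⟨⟨ha2l, ha2u⟩, ⟨hb2l, hb2u⟩, hQ2, _⟩ := point y₂ hy₂
    set α₁ := ‖y₁ - x‖ with hα₁; set β₁ := ‖y₁ - z‖ with hβ₁
    set α₂ := ‖y₂ - x‖ with hα₂; set β₂ := ‖y₂ - z‖ with hβ₂
    set I₁ : ℝ := ⟪y₁ - x, y₁ - z⟫ with hI₁
    set I₂ : ℝ := ⟪y₂ - x, y₂ - z⟫ with hI₂
    set t := r₁ + r₂ - 2 with ht_def
    have ht : 4 ≤ t := by rw [ht_def]; linarith
    have hm1 : (y₁ - x) - (y₁ - z) = z - x := by abel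
    have hm2 : (y₂ - x) - (y₂ - z) = z - x := by abel
    set L2 := ‖z - x‖ ^ 2 with hL2_def
    have hL1 : L2 = α₁ ^ 2 - 2 * I₁ + β₁ ^ 2 := by
      rw [hL2_def, ← hm1, norm_sub_sq_real]
    have hL2' : L2 = α₂ ^ 2 - 2 * I₂ + β₂ ^ 2 := by
      rw [hL2_def, ← hm2, norm_sub_sq_real]
    -- square bounds
    have ha1sq := sq_bounds_aux hr₁ ha1l ha1u
    have hb1sq := sq_bounds_aux hr₂ hb1l hb1u
    have ha2sq := sq_bounds_aux hr₁ ha2l ha2u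
    have hb2sq := sq_bounds_aux hr₂ hb2l hb2u
    -- lower bound on L2
    have hL2low : (1 - c) * t ^ 2 / 2 ≤ L2 := by
      have h1c : (0:ℝ) ≤ 1 - c := by linarith
      have e1 : α₁ ^ 2 + β₁ ^ 2 - 2 * c * (α₁ * β₁) ≤ L2 := by
        linarith [hI1c, hL1]
      have e2 : (1 - c) * (α₁ ^ 2 + β₁ ^ 2) ≤ α₁ ^ 2 + β₁ ^ 2 - 2 * c * (α₁ * β₁) := by
        linarith [mul_nonneg hc0 (sq_nonneg (α₁ - β₁))]
      have e3 : (1 - c) * t ^ 2 / 2 ≤ (1 - c) * (α₁ ^ 2 + β₁ ^ 2) := by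
        have h5 : t ^ 2 / 2 ≤ (r₁ - 1) ^ 2 + (r₂ - 1) ^ 2 := by
          rw [ht_def]; linarith [sq_nonneg (r₁ - r₂)]
        have h4 : t ^ 2 / 2 ≤ α₁ ^ 2 + β₁ ^ 2 := by linarith [ha1sq.1, hb1sq.1]
        have := mul_le_mul_of_nonneg_left h4 h1c
        linarith
      linarith
    -- Lagrange for Q
    have hQl1 : Q y₁ ^ 2 = α₁ ^ 2 * β₁ ^ 2 - I₁ ^ 2 := by
      have := lagrange (y₁ - x) (y₁ - z)
      rw [hQdef]; simp only []; rw [← hα₁, ← hβ₁] at this; linarith [this]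
    have hQl2 : Q y₂ ^ 2 = α₂ ^ 2 * β₂ ^ 2 - I₂ ^ 2 := by
      have := lagrange (y₂ - x) (y₂ - z)
      rw [hQdef]; simp only []; rw [← hα₂, ← hβ₂] at this; linarith [this]
    -- inner product bounds
    have hI1b : |I₁| ≤ (r₁ + 1) * (r₂ + 1) := by
      refine le_trans (abs_real_inner_le_norm _ _) ?_
      rw [← hα₁, ← hβ₁]
      apply mul_le_mul ha1u hb1u (by linarith) (by linarith)
    have hI2b : |I₂| ≤ (r₁ + 1) * (r₂ + 1) := by
      refine le_trans (abs_real_inner_le_norm _ _) ?_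
      rw [← hα₂, ← hβ₂]
      apply mul_le_mul ha2u hb2u (by linarith) (by linarith)
    have hIdiff : I₂ - I₁ = (α₂ ^ 2 - α₁ ^ 2 + (β₂ ^ 2 - β₁ ^ 2)) / 2 := by linarith
    -- bound on |Q₂² - Q₁²|
    have hXa : |α₂ ^ 2 - α₁ ^ 2| ≤ 4 * r₁ := by
      rw [abs_le]; constructor <;> linarith [ha1sq.1, ha1sq.2, ha2sq.1, ha2sq.2]
    have hXb : |β₂ ^ 2 - β₁ ^ 2| ≤ 4 * r₂ := by
      rw [abs_le]; constructor <;> linarith [hb1sq.1, hb1sq.2, hb2sq.1, hb2sq.2]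
    have hX : |α₂ ^ 2 * β₂ ^ 2 - α₁ ^ 2 * β₁ ^ 2| ≤ 4 * r₁ * (r₂ + 1) ^ 2 + (r₁ + 1) ^ 2 * (4 * r₂) := by
      have hsplit : α₂ ^ 2 * β₂ ^ 2 - α₁ ^ 2 * β₁ ^ 2
          = (α₂ ^ 2 - α₁ ^ 2) * β₂ ^ 2 + α₁ ^ 2 * (β₂ ^ 2 - β₁ ^ 2) := by ring
      rw [hsplit]
      refine le_trans (abs_add_le _ _) (add_le_add ?_ ?_)
      · rw [abs_mul, abs_of_nonneg (sq_nonneg β₂)]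
        apply mul_le_mul hXa hb2sq.2 (sq_nonneg _) (by linarith)
      · rw [abs_mul, abs_of_nonneg (sq_nonneg α₁)]
        apply mul_le_mul ha1sq.2 hXb (abs_nonneg _) (by positivity)
    have hIdiffb : |I₂ - I₁| ≤ 2 * r₁ + 2 * r₂ := by
      rw [abs_le] at hXa hXb ⊢
      constructor <;> [linarith [hIdiff, hXa.1, hXb.1]; linarith [hIdiff, hXa.2, hXb.2]]
    have hY : |I₂ ^ 2 - I₁ ^ 2| ≤ 2 * ((r₁ + 1) * (r₂ + 1)) * (2 * r₁ + 2 * r₂) := by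
      have hsplit : I₂ ^ 2 - I₁ ^ 2 = (I₂ + I₁) * (I₂ - I₁) := by ring
      rw [hsplit, abs_mul]
      apply mul_le_mul ?_ hIdiffb (abs_nonneg _) (by positivity)
      refine le_trans (abs_add_le _ _) ?_
      linarith [hI1b, hI2b]
    have hQsq : |Q y₂ ^ 2 - Q y₁ ^ 2| ≤ 48 * t * ((r₁ - 1) * (r₂ - 1)) := by
      have hdecomp : Q y₂ ^ 2 - Q y₁ ^ 2
          = (α₂ ^ 2 * β₂ ^ 2 - α₁ ^ 2 * β₁ ^ 2) - (I₂ ^ 2 - I₁ ^ 2) := by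
        rw [hQl1, hQl2]; ring
      rw [hdecomp]
      refine le_trans (abs_sub _ _) ?_
      have hnum : 4 * r₁ * (r₂ + 1) ^ 2 + (r₁ + 1) ^ 2 * (4 * r₂)
          + 2 * ((r₁ + 1) * (r₂ + 1)) * (2 * r₁ + 2 * r₂)
          ≤ 48 * t * ((r₁ - 1) * (r₂ - 1)) := by
        rw [ht_def]
        exact hnum_aux r₁ r₂ hr₁ hr₂
      linarith [hX, hY]
    have hQdiff : |Q y₂ - Q y₁| ≤ 24 * t / s := by
      have hkey := same_sign_diff (Q y₁) (Q y₂) g (48 * t * ((r₁ - 1) * (r₂ - 1))) hg hQ1 hQ2 hsign hQsq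
      have heq : 48 * t * ((r₁ - 1) * (r₂ - 1)) / (2 * g) = 24 * t / s := by
        rw [hg_def]
        have h1 : r₁ - 1 ≠ 0 := by linarith
        have h2 : r₂ - 1 ≠ 0 := by linarith
        field_simp
        ring
      rwa [heq] at hkey
    -- bound on inner product with axis
    have hPval : ⟪y₂ - y₁, z - x⟫ = (α₂ ^ 2 - α₁ ^ 2 - (β₂ ^ 2 - β₁ ^ 2)) / 2 := by
      have hsplit : y₂ - y₁ = (y₂ - x) - (y₁ - x) := by abel
      have e2 : ⟪y₂ - x, z - x⟫ = α₂ ^ 2 - I₂ := by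
        rw [← hm2, inner_sub_right, real_inner_self_eq_norm_sq, ← hα₂, ← hI₂]
      have e1 : ⟪y₁ - x, z - x⟫ = α₁ ^ 2 - I₁ := by
        rw [← hm1, inner_sub_right, real_inner_self_eq_norm_sq, ← hα₁, ← hI₁]
      rw [hsplit, inner_sub_left, e1, e2]
      linarith [hIdiff]
    have hPb : |⟪y₂ - y₁, z - x⟫| ≤ 3 * t := by
      rw [hPval, abs_le]
      rw [abs_le] at hXa hXb
      constructor
      · linarith [hXa.1, hXb.2]
      · linarith [hXa.2, hXb.1]
    -- omega with axis
    have hwQ : |omg (y₂ - y₁) (z - x)| ≤ 24 * t / s := by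
      have hsplit : y₂ - y₁ = (y₂ - x) - (y₁ - x) := by abel
      have e2 : omg (y₂ - x) (z - x) = -Q y₂ := by
        rw [← hm2, omg_self_sub, hQdef]
      have e1 : omg (y₁ - x) (z - x) = -Q y₁ := by
        rw [← hm1, omg_self_sub, hQdef]
      rw [hsplit, omg_sub_left, e1, e2]
      rw [show -Q y₂ - -Q y₁ = -(Q y₂ - Q y₁) by ring, abs_neg]
      exact hQdiff
    -- final
    have hlag := lagrange (y₂ - y₁) (z - x)
    have hts : 0 < 24 * t / s := by positivity
    have hP2 : ⟪y₂ - y₁, z - x⟫ ^ 2 ≤ (3 * t) ^ 2 := by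
      rw [abs_le] at hPb; exact sq_le_sq' hPb.1 hPb.2
    have hW2 : omg (y₂ - y₁) (z - x) ^ 2 ≤ (24 * t / s) ^ 2 := by
      rw [abs_le] at hwQ; exact sq_le_sq' hwQ.1 hwQ.2
    have hnorm2 : ‖y₂ - y₁‖ ^ 2 * L2 ≤ t ^ 2 * (3 + 24 / s) ^ 2 := by
      rw [hL2_def]
      exact norm2_aux _ _ _ t s hs hlag hP2 hW2
    have h1c : (0:ℝ) < 1 - c := by linarith
    have hD2 : ‖y₂ - y₁‖ ^ 2 ≤ 2 * (3 + 24 / s) ^ 2 / (1 - c) := by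
      rw [le_div_iff₀ h1c]
      have ht2 : (0:ℝ) < t ^ 2 := by positivity
      have hlow : ‖y₂ - y₁‖ ^ 2 * ((1 - c) * t ^ 2 / 2) ≤ ‖y₂ - y₁‖ ^ 2 * L2 :=
        mul_le_mul_of_nonneg_left hL2low (sq_nonneg _)
      have h' : (‖y₂ - y₁‖ ^ 2 * (1 - c) / 2) * t ^ 2 ≤ ((3 + 24 / s) ^ 2) * t ^ 2 := by
        linarith [hnorm2, hlow]
      have h'' := cancel_pos_aux ht2 h'
      linarith
    have hdist : dist y₁ y₂ = ‖y₂ - y₁‖ := by rw [dist_eq_norm, norm_sub_rev]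
    rw [hdist, hD_def]
    calc ‖y₂ - y₁‖ = Real.sqrt (‖y₂ - y₁‖ ^ 2) := (Real.sqrt_sq (norm_nonneg _)).symm
      _ ≤ Real.sqrt (2 * (3 + 24 / s) ^ 2 / (1 - c)) := Real.sqrt_le_sqrt hD2
  -- split by sign and count
  set S₁ := S.filter (fun y => 0 < Q y) with hS₁def
  set S₂ := S.filter (fun y => ¬ 0 < Q y) with hS₂def
  have hcard : S₁.card + S₂.card = S.card :=
    Finset.card_filter_add_card_filter_not _
  have hQne : ∀ y ∈ S, Q y ≠ 0 := by
    intro y hy h0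
    have := (point y hy).2.2.1
    rw [h0] at this; simp at this; linarith
  have hc1' : (S₁.card : ℝ) ≤ N := by
    apply hN
    · intro p hp q hq hpq
      exact hsep p (Finset.mem_of_mem_filter _ hp) q (Finset.mem_of_mem_filter _ hq) hpq
    · intro p hp q hq
      rw [hS₁def, Finset.mem_filter] at hp hq
      exact pair p hp.1 q hq.1 (_root_.mul_pos hp.2 hq.2)
  have hc2' : (S₂.card : ℝ) ≤ N := by
    apply hN
    · intro p hp q hq hpq
      exact hsep p (Finset.mem_of_mem_filter _ hp) q (Finset.mem_of_mem_filter _ hq) hpq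
    · intro p hp q hq
      rw [hS₂def, Finset.mem_filter] at hp hq
      have hpneg : Q p < 0 := lt_of_le_of_ne (not_lt.1 hp.2) (hQne p hp.1)
      have hqneg : Q q < 0 := lt_of_le_of_ne (not_lt.1 hq.2) (hQne q hq.1)
      exact pair p hp.1 q hq.1 (mul_pos_of_neg_of_neg hpneg hqneg)
  have : (S.card : ℝ) = (S₁.card : ℝ) + (S₂.card : ℝ) := by
    rw [← hcard]; push_cast; ring
  linarith
end
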